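/- arXiv:1710.00423 — 11 statements merged into one kernel-verified Lean document; each statement's English description precedes it below -/
import Mathlib

section
/- Let R be an integral domain of characteristic 0 in which (p) is a prime ideal, and let φ : R → R be a ring homomorphism such that φ(a) ≡ a^p (mod p) for every a ∈ R. Then for every a ∈ R, every integer m ≥ 0, and every r ≥ 1, a^(m·p^r) ≡ φ(a)^(m·p^(r-1)) (mod p^r). -/
lemma gauss_key {R : Type*} [CommRing R] (p k : ℕ) (hk : 1 ≤ k) (x y : R)
    (h : (p : R) ^ k ∣ x - y) : (p : R) ^ (k + 1) ∣ x ^ p - y ^ p := by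
  set S : R := ∑ i ∈ Finset.range p, x ^ i * y ^ (p - 1 - i) with hS
  have hfac : x ^ p - y ^ p = S * (x - y) := (geom_sum₂_mul x y p).symm
  have hpk : (p : R) ∣ (p : R) ^ k := dvd_pow_self _ (by omega)
  have hxy : (p : R) ∣ x - y := hpk.trans h
  have hterm : ∀ i ∈ Finset.range p, (p : R) ∣ x ^ i * y ^ (p - 1 - i) - x ^ (p - 1) := by
    intro i hi
    have hi' : i < p := Finset.mem_range.mp hi
    have hx : x ^ (p - 1) = x ^ i * x ^ (p - 1 - i) := by
      rw [← pow_add]; congr 1; omega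
    rw [hx]
    have : (p : R) ∣ y ^ (p - 1 - i) - x ^ (p - 1 - i) := by
      have := sub_dvd_pow_sub_pow y x (p - 1 - i)
      exact (dvd_sub_comm.mp hxy).trans this
    calc (p : R) ∣ x ^ i * (y ^ (p - 1 - i) - x ^ (p - 1 - i)) := this.mul_left _
      _ = x ^ i * y ^ (p - 1 - i) - x ^ i * x ^ (p - 1 - i) := by ring
  have hsum : (p : R) ∣ S - p * x ^ (p - 1) := by
    have : S - (p : R) * x ^ (p - 1) =
        ∑ i ∈ Finset.range p, (x ^ i * y ^ (p - 1 - i) - x ^ (p - 1)) := by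
      rw [Finset.sum_sub_distrib, Finset.sum_const, Finset.card_range]
      push_cast; ring
    rw [this]
    exact Finset.dvd_sum hterm
  have hpS : (p : R) ∣ S := by
    have := dvd_add hsum (Dvd.intro (x ^ (p - 1)) rfl)
    simpa using this
  rw [hfac, pow_succ']
  exact mul_dvd_mul hpS h

/-- Gauss congruences in a domain with a `p`-Frobenius lift. -/
theorem gauss_congruence_frobenius_lift (p : ℕ) (hp : p.Prime)
    (R : Type*) [CommRing R] [IsDomain R] [CharZero R]
    (hprime : (Ideal.span {(p : R)}).IsPrime)
    (φ : R →+* R) (hφ : ∀ a : R, (p : R) ∣ φ a - a ^ p)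
    (a : R) (m r : ℕ) (hr : 1 ≤ r) :
    ((p : R)) ^ r ∣ a ^ (m * p ^ r) - (φ a) ^ (m * p ^ (r - 1)) := by
  induction r, hr using Nat.le_induction with
  | base =>
    simp only [pow_one, Nat.sub_self, pow_zero, mul_one]
    have h1 : (p : R) ∣ (φ a) ^ m - (a ^ p) ^ m :=
      (hφ a).trans (sub_dvd_pow_sub_pow _ _ m)
    have h2 : (a ^ p) ^ m = a ^ (m * p) := by rw [← pow_mul, mul_comm]
    rw [h2] at h1
    exact dvd_sub_comm.mp h1
  | succ n hn ih =>
    have key := gauss_key p n hn (a ^ (m * p ^ n)) ((φ a) ^ (m * p ^ (n - 1))) ih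
    rw [← pow_mul, ← pow_mul] at key
    have e1 : m * p ^ n * p = m * p ^ (n + 1) := by ring
    have e2 : m * p ^ (n - 1) * p = m * p ^ (n + 1 - 1) := by
      rw [mul_assoc, ← pow_succ]; congr 2; omega
    rw [e1, e2] at key
    exact key
end

section
/- A sequence (a_k) of p-adic integers satisfies a_{mp^r} ≡ a_{mp^{r-1}} (mod p^r) for all primes p, all m ≥ 0 and all r ≥ 1, if and only if for every positive integer m, the sum ∑_{d | m} μ(m/d)·a_d is divisible by m. -/
/-!
Let `b = μ ∗ a`, so that `a n = ∑_{d ∣ n} b d` by Möbius inversion. If `m = n p^e` with `p ∤ n`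
and `e ≥ 1`, then `μ (m / d')` vanishes unless `p^(e-1) ∣ d'`, and `b m` collapses to
`∑_{d ∣ n} μ (n / d) (a (d p^e) - a (d p^(e-1)))`; so the Gauss congruences give `p^e ∣ b m` for
every prime power exactly dividing `m`. Conversely, `a (m p^r) - a (m p^(r-1))` is the sum of `b d`
over the divisors `d` of `m p^r` that do not divide `m p^(r-1)`; these are all multiples of `p^r`,
so `d ∣ b d` gives the congruence.
-/

open Finset ArithmeticFunction
open scoped ArithmeticFunction.Moebius

theorem Nat.Coprime.sum_divisors_mul_eq {M : Type*} [AddCommMonoid M] {m n : ℕ}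
    (hmn : m.Coprime n) (f : ℕ → M) :
    ∑ d ∈ (m * n).divisors, f d = ∑ d₁ ∈ m.divisors, ∑ d₂ ∈ n.divisors, f (d₁ * d₂) := by
  rw [hmn.divisors_mul, sum_map]
  exact (sum_attach _ fun x : ℕ × ℕ => f (x.1 * x.2)).trans (sum_product _ _ _)

theorem Nat.Prime.pow_succ_dvd_of_dvd_mul_pow_succ {p d m k : ℕ} (hp : p.Prime)
    (h : d ∣ m * p ^ (k + 1)) (h' : ¬ d ∣ m * p ^ k) : p ^ (k + 1) ∣ d := by
  obtain ⟨y, z, hy, hz, rfl⟩ := Nat.dvd_mul.mp h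
  obtain ⟨j, hj, rfl⟩ := (Nat.dvd_prime_pow hp).mp hz
  obtain rfl : j = k + 1 := by
    by_contra hne
    exact h' (mul_dvd_mul hy (pow_dvd_pow p (by omega)))
  exact dvd_mul_left _ _

theorem sum_range_moebius_prime_pow_mul {R : Type*} [Ring R] {p : ℕ} (hp : p.Prime) (k : ℕ)
    (x : ℕ → R) : ∑ i ∈ range (k + 2), (μ (p ^ (k + 1 - i)) : R) * x i = x (k + 1) - x k := by
  have hvanish : ∀ i ∈ range k, (μ (p ^ (k + 1 - i)) : R) * x i = 0 := fun i hi => by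
    rw [mem_range] at hi
    rw [moebius_apply_prime_pow hp (by omega), if_neg (by omega)]
    simp
  rw [sum_range_succ, sum_range_succ, sum_eq_zero hvanish, Nat.sub_self, pow_zero,
    show k + 1 - k = 1 by omega, pow_one, moebius_apply_prime hp]
  simp [sub_eq_neg_add]

theorem Int.natCast_dvd_of_forall_prime_pow_dvd {m : ℕ} {x : ℤ}
    (h : ∀ p k : ℕ, p.Prime → p ^ k ∣ m → (p : ℤ) ^ k ∣ x) : (m : ℤ) ∣ x :=
  Int.natCast_dvd.mpr <| (Nat.dvd_iff_prime_pow_dvd_dvd _ _).mpr fun p k hp hk =>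
    Int.natCast_dvd.mp <| by exact_mod_cast h p k hp hk

section

variable {R : Type*} [Ring R]

def moebiusSum (a : ℕ → R) (m : ℕ) : R :=
  ∑ d ∈ m.divisors, (μ (m / d) : R) * a d

theorem sum_divisors_moebiusSum (a : ℕ → R) {n : ℕ} (hn : 0 < n) :
    ∑ d ∈ n.divisors, moebiusSum a d = a n := by
  refine sum_eq_iff_sum_mul_moebius_eq.mpr (fun n _ => ?_) n hn
  exact Nat.sum_divisorsAntidiagonal' (fun x y => (μ x : R) * a y)

theorem moebiusSum_mul_prime_pow_succ (a : ℕ → R) {p n : ℕ} (hp : p.Prime) (hn : ¬ p ∣ n)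
    (k : ℕ) : moebiusSum a (n * p ^ (k + 1)) =
      ∑ d ∈ n.divisors, (μ (n / d) : R) * (a (d * p ^ (k + 1)) - a (d * p ^ k)) := by
  have hnp : n.Coprime p := (hp.coprime_iff_not_dvd.mpr hn).symm
  rw [moebiusSum, (hnp.pow_right _).sum_divisors_mul_eq]
  refine sum_congr rfl fun d hd => ?_
  rw [Nat.sum_divisors_prime_pow hp,
    ← sum_range_moebius_prime_pow_mul hp k (fun i => a (d * p ^ i)), mul_sum]
  refine sum_congr rfl fun i hi => ?_
  have hi : i ≤ k + 1 := Nat.le_of_lt_succ (mem_range.mp hi)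
  have hd : d ∣ n := Nat.dvd_of_mem_divisors hd
  rw [← Nat.div_mul_div_comm hd (pow_dvd_pow p hi), Nat.pow_div hi hp.pos,
    isMultiplicative_moebius.map_mul_of_coprime
      ((hnp.coprime_dvd_left (Nat.div_dvd_of_dvd hd)).pow_right _), Int.cast_mul, mul_assoc]

end

theorem prime_pow_dvd_moebiusSum_mul_prime_pow {a : ℕ → ℤ} {p n : ℕ} (hp : p.Prime)
    (H : ∀ m k : ℕ, a (m * p ^ (k + 1)) ≡ a (m * p ^ k) [ZMOD (p : ℤ) ^ (k + 1)])
    (hn : ¬ p ∣ n) : ∀ e : ℕ, (p : ℤ) ^ e ∣ moebiusSum a (n * p ^ e)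
  | 0 => by simp
  | k + 1 => by
    rw [moebiusSum_mul_prime_pow_succ a hp hn]
    exact dvd_sum fun d _ => dvd_mul_of_dvd_right (H d k).symm.dvd _

theorem dvd_moebiusSum {a : ℕ → ℤ}
    (H : ∀ p : ℕ, p.Prime → ∀ m k : ℕ,
      a (m * p ^ (k + 1)) ≡ a (m * p ^ k) [ZMOD (p : ℤ) ^ (k + 1)])
    {m : ℕ} (hm : m ≠ 0) : (m : ℤ) ∣ moebiusSum a m := by
  refine Int.natCast_dvd_of_forall_prime_pow_dvd fun p k hp hk => ?_
  have hdvd := prime_pow_dvd_moebiusSum_mul_prime_pow hp (H p hp) (Nat.not_dvd_ordCompl hp hm)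
    (m.factorization p)
  rw [Nat.div_mul_cancel (Nat.ordProj_dvd m p)] at hdvd
  exact (pow_dvd_pow _ ((hp.pow_dvd_iff_le_factorization hm).mp hk)).trans hdvd

theorem gauss_congruence_of_dvd_moebiusSum {a : ℕ → ℤ}
    (H : ∀ n : ℕ, 0 < n → (n : ℤ) ∣ moebiusSum a n) {p : ℕ} (hp : p.Prime) (m k : ℕ) :
    a (m * p ^ (k + 1)) ≡ a (m * p ^ k) [ZMOD (p : ℤ) ^ (k + 1)] := by
  rcases Nat.eq_zero_or_pos m with rfl | hm
  · simp [Int.ModEq.refl]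
  have hpos : ∀ j, 0 < m * p ^ j := fun j => Nat.mul_pos hm (pow_pos hp.pos j)
  have hsub : (m * p ^ k).divisors ⊆ (m * p ^ (k + 1)).divisors :=
    Nat.divisors_subset_of_dvd (hpos _).ne' (mul_dvd_mul_left m (pow_dvd_pow p k.le_succ))
  refine (Int.modEq_iff_dvd.mpr ?_).symm
  rw [← sum_divisors_moebiusSum a (hpos _), ← sum_divisors_moebiusSum a (hpos k),
    ← sum_sdiff_eq_sub hsub]
  refine dvd_sum fun d hd => ?_
  obtain ⟨hd, hd'⟩ := mem_sdiff.mp hd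
  have hpd : p ^ (k + 1) ∣ d := hp.pow_succ_dvd_of_dvd_mul_pow_succ (Nat.dvd_of_mem_divisors hd)
    fun h => hd' (Nat.mem_divisors.mpr ⟨h, (hpos k).ne'⟩)
  exact (Int.natCast_dvd_natCast.mpr hpd).trans (H d (Nat.pos_of_mem_divisors hd))

/-- A sequence of integers satisfies the Gauss congruences for all primes if and only if
for every positive integer `m`, `m` divides `∑_{d ∣ m} μ(m/d)·a_d`. -/
theorem gauss_congruences_iff_moebius_sum (a : ℕ → ℤ) :
    (∀ p : ℕ, p.Prime → ∀ m r : ℕ, 1 ≤ r →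
      a (m * p ^ r) ≡ a (m * p ^ (r - 1)) [ZMOD (p : ℤ) ^ r]) ↔
    (∀ m : ℕ, 0 < m →
      (m : ℤ) ∣ ∑ d ∈ m.divisors, ArithmeticFunction.moebius (m / d) * a d) := by
  constructor
  · intro H m hm
    exact dvd_moebiusSum (fun p hp m k => H p hp m (k + 1) k.succ_pos) hm.ne'
  · intro H p hp m r hr
    obtain ⟨k, rfl⟩ := Nat.exists_eq_add_of_le' hr
    exact gauss_congruence_of_dvd_moebiusSum H hp m k
end

section
/- Let p be a prime and let f(x) = ∑_{k≥0} f_k x^k ∈ ℤ_p[[x]] be a power series with constant term f_0 = 1. Then the coefficients c_k of the power series x·f'(x)/f(x) = ∑_{k≥1} c_k x^k are p-adic integers and satisfy c_{mp^r} ≡ c_{mp^{r-1}} (mod p^r) for all m ≥ 1 and r ≥ 1. -/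
/-!
Choosing the `β_d` degree by degree, `f ≡ ∏_{d=1}^{N} (1 - β_d X^d)` modulo `X^{N+1}`. The
logarithmic derivative `X f'/f` turns products into sums and, up to degree `N`, only depends on
`f` modulo `X^{N+1}`; hence its `n`-th coefficient is `-∑_{d ∣ n} d β_d^{n/d}`, minus the `n`-th
ghost component of the big Witt vector `(β_d)`. Going from `n = m p^{r-1}` to `n p`, the new
divisors `d` are divisible by `p^r`, and for the old ones `p^{r-1} ∣ d k` gives
`p^r ∣ d (β^{p k} - β^k)` by Fermat's little theorem and lifting the exponent.
-/

open PowerSeries Finset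

lemma Nat.pow_succ_dvd_of_dvd_mul_of_not_dvd {p r n d : ℕ} (hp : p.Prime) (hn : p ^ r ∣ n)
    (hd : d ∣ n * p) (hdn : ¬ d ∣ n) : p ^ (r + 1) ∣ d := by
  obtain ⟨e, he⟩ := hd
  have hpe : ¬ p ∣ e := by
    rintro ⟨e', rfl⟩
    exact hdn ⟨e', Nat.eq_of_mul_eq_mul_right hp.pos (by rw [he]; ring)⟩
  refine ((hp.coprime_iff_not_dvd.mpr hpe).pow_left (r + 1)).dvd_of_dvd_mul_right ?_
  rw [← he, pow_succ]
  exact mul_dvd_mul_right hn p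

section GhostComponent

variable {R : Type*} [CommRing R] {p : ℕ}

lemma natCast_dvd_pow_mul_sub_pow {b : R} (hb : (p : R) ∣ b ^ p - b) (k : ℕ) :
    (p : R) ∣ b ^ (p * k) - b ^ k := by
  rw [pow_mul]
  exact hb.trans (sub_dvd_pow_sub_pow _ _ k)

lemma natCast_pow_succ_dvd_mul_pow_sub_pow (hp : p.Prime) {b : R} (hb : (p : R) ∣ b ^ p - b)
    {r d k : ℕ} (hdk : p ^ r ∣ d * k) : (p : R) ^ (r + 1) ∣ d * (b ^ (p * k) - b ^ k) := by
  induction r generalizing d k with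
  | zero => simpa using (natCast_dvd_pow_mul_sub_pow hb k).mul_left (d : R)
  | succ r ih =>
    rcases (Nat.Prime.dvd_mul hp).mp ((dvd_pow_self p r.succ_ne_zero).trans hdk) with
      ⟨d, rfl⟩ | ⟨k, rfl⟩
    · have hdk' : p ^ r ∣ d * k :=
        Nat.dvd_of_mul_dvd_mul_left hp.pos (by rwa [← pow_succ', ← mul_assoc])
      rw [pow_succ', Nat.cast_mul, mul_assoc]
      exact mul_dvd_mul_left _ (ih hdk')
    · have hdk' : p ^ r ∣ d * k :=
        Nat.dvd_of_mul_dvd_mul_left hp.pos (by rwa [← pow_succ', mul_left_comm])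
      -- `b^(p k) ≡ b^k` mod `p`, so `p` divides the geometric sum
      -- `(b^(p² k) - b^(p k)) / (b^(p k) - b^k)`.
      have hgeom := dvd_geom_sum₂_self (n := p) (natCast_dvd_pow_mul_sub_pow hb k)
      have hfactor : b ^ (p * (p * k)) - b ^ (p * k) =
          (∑ i ∈ range p, (b ^ (p * k)) ^ i * (b ^ k) ^ (p - 1 - i)) * (b ^ (p * k) - b ^ k) := by
        rw [geom_sum₂_mul, ← pow_mul, ← pow_mul, mul_comm k p, mul_comm (p * k) p]
      rw [hfactor, pow_succ, mul_left_comm, mul_comm ((p : R) ^ (r + 1))]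
      exact mul_dvd_mul hgeom (ih hdk')

/-- The `n`-th ghost component of the big Witt vector with coordinates `β`. -/
def ghostComponent (β : ℕ → R) (n : ℕ) : R :=
  ∑ d ∈ n.divisors, (d : R) * β d ^ (n / d)

lemma natCast_pow_succ_dvd_ghostComponent_mul_sub (hp : p.Prime) {β : ℕ → R}
    (hβ : ∀ d, (p : R) ∣ β d ^ p - β d) {r n : ℕ} (hn : p ^ r ∣ n) :
    (p : R) ^ (r + 1) ∣ ghostComponent β (n * p) - ghostComponent β n := by
  rcases Nat.eq_zero_or_pos n with rfl | hn0
  · simp [ghostComponent]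
  have hsub : n.divisors ⊆ (n * p).divisors :=
    Nat.divisors_subset_of_dvd (Nat.mul_pos hn0 hp.pos).ne' (dvd_mul_right n p)
  rw [ghostComponent, ghostComponent, ← sum_sdiff hsub, add_sub_assoc, ← sum_sub_distrib]
  refine dvd_add (dvd_sum fun d hd => ?_) (dvd_sum fun d hd => ?_)
  · obtain ⟨hd, hdn⟩ := mem_sdiff.mp hd
    have hpd : p ^ (r + 1) ∣ d := Nat.pow_succ_dvd_of_dvd_mul_of_not_dvd hp hn
      (Nat.dvd_of_mem_divisors hd) fun h => hdn (Nat.mem_divisors.mpr ⟨h, hn0.ne'⟩)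
    exact (by exact_mod_cast Nat.cast_dvd_cast (α := R) hpd : (p : R) ^ (r + 1) ∣ d).mul_right _
  · have hdn := Nat.dvd_of_mem_divisors hd
    rw [← mul_sub, mul_comm n p, Nat.mul_div_assoc p hdn]
    exact natCast_pow_succ_dvd_mul_pow_sub_pow hp (hβ d) (by rwa [Nat.mul_div_cancel' hdn])

end GhostComponent

namespace PowerSeries

variable {R : Type*} [CommRing R]

lemma coeff_X_mul_derivative (h : R⟦X⟧) (n : ℕ) :
    coeff n (X * d⁄dX R h) = n * coeff n h := by
  cases n with
  | zero => simp
  | succ n => rw [coeff_succ_X_mul, coeff_derivative, mul_comm]; push_cast; rfl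

lemma X_pow_dvd_X_mul_derivative {h : R⟦X⟧} {n : ℕ} (hn : X ^ n ∣ h) :
    X ^ n ∣ X * d⁄dX R h := by
  rw [X_pow_dvd_iff] at hn ⊢
  intro m hm
  rw [coeff_X_mul_derivative, hn m hm, mul_zero]

/-- `g = X f' / f`, stated without dividing by `f`. -/
def IsLogDeriv (f g : R⟦X⟧) : Prop :=
  f * g = X * d⁄dX R f

namespace IsLogDeriv

lemma mul {a b u v : R⟦X⟧} (ha : IsLogDeriv a u) (hb : IsLogDeriv b v) :
    IsLogDeriv (a * b) (u + v) := by
  unfold IsLogDeriv at *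
  rw [Derivation.leibniz, smul_eq_mul, smul_eq_mul]
  linear_combination b * ha + a * hb

lemma prod {ι : Type*} (s : Finset ι) {F G : ι → R⟦X⟧} (h : ∀ i ∈ s, IsLogDeriv (F i) (G i)) :
    IsLogDeriv (∏ i ∈ s, F i) (∑ i ∈ s, G i) := by
  classical
  induction s using Finset.induction_on with
  | empty => simp [IsLogDeriv]
  | insert i s hi ih =>
    rw [prod_insert hi, sum_insert hi]
    exact (h i (mem_insert_self i s)).mul (ih fun j hj => h j (mem_insert_of_mem hj))

lemma X_pow_dvd_sub {f g F G : R⟦X⟧} (hg : IsLogDeriv f g) (hG : IsLogDeriv F G)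
    (hf : IsUnit (constantCoeff f)) {n : ℕ} (hfF : X ^ n ∣ f - F) : X ^ n ∣ g - G := by
  have key : f * (g - G) = X * d⁄dX R (f - F) - (f - F) * G := by
    unfold IsLogDeriv at hg hG
    rw [map_sub]
    linear_combination hg - hG
  rw [← (isUnit_iff_constantCoeff.mpr hf).dvd_mul_left, key]
  exact dvd_sub (X_pow_dvd_X_mul_derivative hfF) (hfF.mul_right G)

end IsLogDeriv

def logDerivOneSub (d : ℕ) (β : R) : R⟦X⟧ :=
  mk fun k => if d ∣ k ∧ k ≠ 0 then -(d * β ^ (k / d)) else 0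

lemma isLogDeriv_one_sub_C_mul_X_pow {d : ℕ} (hd : d ≠ 0) (β : R) :
    IsLogDeriv (1 - C β * X ^ d) (logDerivOneSub d β) := by
  unfold IsLogDeriv
  ext n
  rw [coeff_X_mul_derivative, sub_mul, one_mul, mul_assoc, map_sub, coeff_C_mul,
    coeff_X_pow_mul', map_sub, coeff_one, coeff_C_mul, coeff_X_pow]
  simp only [logDerivOneSub, coeff_mk]
  rcases lt_or_ge n d with hn | hn
  · have hnd : ¬ (d ∣ n ∧ n ≠ 0) := fun h =>
      Nat.not_dvd_of_pos_of_lt (Nat.pos_of_ne_zero h.2) hn h.1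
    rw [if_neg hnd, if_neg (not_le.mpr hn), if_neg hn.ne]
    rcases eq_or_ne n 0 with rfl | hn0 <;> simp [*]
  obtain ⟨j, rfl⟩ := Nat.exists_eq_add_of_le' hn
  rw [if_pos hn, Nat.add_sub_cancel, Nat.add_div_right j (Nat.pos_of_ne_zero hd)]
  simp only [Nat.dvd_add_self_right]
  rcases eq_or_ne j 0 with rfl | hj
  · simp [hd]
  have hjd : j + d ≠ 0 := by omega
  have hjd' : j + d ≠ d := by omega
  by_cases hdj : d ∣ j
  · simp only [hdj, hj, hjd, hjd', ne_eq, not_false_eq_true, and_self, if_true, if_false, pow_succ]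
    ring
  · simp [hdj, hj]

lemma coeff_sum_logDerivOneSub (β : ℕ → R) {n k : ℕ} (hk : k ≠ 0) (hkn : k ≤ n) :
    coeff k (∑ d ∈ Icc 1 n, logDerivOneSub d (β d)) = -ghostComponent β k := by
  have hsub : k.divisors ⊆ Icc 1 n := fun d hd =>
    mem_Icc.mpr ⟨Nat.pos_of_mem_divisors hd, (Nat.divisor_le hd).trans hkn⟩
  simp only [map_sum, logDerivOneSub, coeff_mk, hk, ne_eq, not_false_eq_true, and_true]
  rw [← sum_subset hsub fun d _ hd => if_neg fun h => hd (Nat.mem_divisors.mpr ⟨h, hk⟩),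
    ghostComponent, ← sum_neg_distrib]
  exact sum_congr rfl fun d hd => if_pos (Nat.dvd_of_mem_divisors hd)

lemma exists_X_pow_succ_dvd_sub_prod_one_sub {f : R⟦X⟧} (hf : constantCoeff f = 1) (n : ℕ) :
    ∃ β : ℕ → R, X ^ (n + 1) ∣ f - ∏ d ∈ Icc 1 n, (1 - C (β d) * X ^ d) := by
  induction n with
  | zero => exact ⟨0, by simp [X_dvd_iff, hf]⟩
  | succ n ih =>
    obtain ⟨β, q, hq⟩ := ih
    set P := ∏ d ∈ Icc 1 n, (1 - C (β d) * X ^ d)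
    have hP : constantCoeff P = 1 := by
      rw [map_prod]
      exact prod_eq_one fun d hd => by
        simp [zero_pow (Nat.one_le_iff_ne_zero.mp (mem_Icc.mp hd).1)]
    set b := -constantCoeff q
    refine ⟨Function.update β (n + 1) b, ?_⟩
    have hprod : ∏ d ∈ Icc 1 (n + 1), (1 - C (Function.update β (n + 1) b d) * X ^ d) =
        P * (1 - C b * X ^ (n + 1)) := by
      rw [prod_Icc_succ_top (by omega), Function.update_self]
      congr 1
      exact prod_congr rfl fun d hd => by
        rw [Function.update_of_ne (by simp at hd; omega)]
    -- The correction factor `1 - b X^(n+1)` kills the coefficient of `X^(n+1)` in `f - P`.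
    have hfP : f - P * (1 - C b * X ^ (n + 1)) = X ^ (n + 1) * (q + C b * P) := by
      linear_combination hq
    rw [hprod, hfP, pow_succ]
    exact mul_dvd_mul_left _ (X_dvd_iff.mpr (by simp [b, hP]))

end PowerSeries

lemma PadicInt.natCast_dvd_pow_sub_self {p : ℕ} [Fact p.Prime] (a : ℤ_[p]) :
    (p : ℤ_[p]) ∣ a ^ p - a := by
  have h : PadicInt.toZMod (a ^ p - a) = 0 := by
    rw [map_sub, map_pow, ZMod.pow_card, sub_self]
  rwa [← Ideal.mem_span_singleton, ← PadicInt.maximalIdeal_eq_span_p,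
    ← PadicInt.ker_toZMod, RingHom.mem_ker]

/-- If `f ∈ ℤ_p[[x]]` has constant term 1 and `g = x·f'/f` (i.e. `f * g = x·f'`),
then the coefficients of `g` satisfy the Gauss congruences for `p`. -/
theorem logDeriv_gauss_congruence (p : ℕ) [Fact p.Prime]
    (f g : PowerSeries ℤ_[p]) (hf : PowerSeries.constantCoeff (R := ℤ_[p]) f = 1)
    (hg : f * g = PowerSeries.X * f.derivativeFun)
    (m r : ℕ) (hm : 1 ≤ m) (hr : 1 ≤ r) :
    ((p : ℤ_[p])) ^ r ∣
      PowerSeries.coeff (R := ℤ_[p]) (m * p ^ r) g - PowerSeries.coeff (R := ℤ_[p]) (m * p ^ (r - 1)) g := by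
  have hp : p.Prime := Fact.out
  obtain ⟨s, rfl⟩ : ∃ s, r = s + 1 := ⟨r - 1, by omega⟩
  set N := m * p ^ (s + 1)
  obtain ⟨β, hβ⟩ := exists_X_pow_succ_dvd_sub_prod_one_sub hf N
  have hgG : X ^ (N + 1) ∣ g - ∑ d ∈ Icc 1 N, logDerivOneSub d (β d) :=
    IsLogDeriv.X_pow_dvd_sub hg
      (IsLogDeriv.prod _ fun d hd => isLogDeriv_one_sub_C_mul_X_pow (by simp at hd; omega) (β d))
      (hf ▸ isUnit_one) hβ
  have hcoeff : ∀ k, k ≠ 0 → k ≤ N → coeff k g = -ghostComponent β k := fun k hk hkN => by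
    rw [← coeff_sum_logDerivOneSub β hk hkN, ← sub_eq_zero, ← map_sub]
    exact X_pow_dvd_iff.mp hgG k (by omega)
  have hs : m * p ^ s * p = N := by rw [mul_assoc, ← pow_succ]
  have hms : m * p ^ s ≠ 0 := (Nat.mul_pos hm (pow_pos hp.pos s)).ne'
  rw [hcoeff _ (hs ▸ mul_ne_zero hms hp.ne_zero) le_rfl, Nat.add_sub_cancel,
    hcoeff _ hms (hs ▸ Nat.le_mul_of_pos_right _ hp.pos), neg_sub_neg, dvd_sub_comm, ← hs]
  exact natCast_pow_succ_dvd_ghostComponent_mul_sub hp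
    (fun d => PadicInt.natCast_dvd_pow_sub_self (β d)) (dvd_mul_left _ _)
end

section
/- Let R be an integral domain and let f ∈ R[[x]] be a univariate power series with constant term 1. Then there exist unique elements a_k ∈ R for k ≥ 1 such that f = ∏_{k≥1} (1 − a_k x^k), where the infinite product converges coefficientwise. -/
open PowerSeries

/-!
Multiplying the partial product `∏_{k ≤ N} (1 - a_k X^k)` by the factor `1 - a_{N+1} X^{N+1}`
leaves the coefficients below `X^{N+1}` unchanged and subtracts `a_{N+1}` from the coefficient of
`X^{N+1}`, because the partial product has constant coefficient `1`. Matching the coefficient of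
`X^{N+1}` with that of `f` therefore determines `a_{N+1}` from `a_1, …, a_N`, which gives both
existence (by recursion) and uniqueness (by strong induction).
-/

namespace PowerSeries

variable {R : Type*} [CommRing R]

noncomputable def eulerPartialProd (a : ℕ → R) (N : ℕ) : R⟦X⟧ :=
  ∏ k ∈ Finset.Icc 1 N, (1 - C (a k) * X ^ k)

theorem constantCoeff_eulerPartialProd (a : ℕ → R) (N : ℕ) :
    constantCoeff (eulerPartialProd a N) = 1 := by
  rw [eulerPartialProd, map_prod]
  refine Finset.prod_eq_one fun k hk => ?_
  have hk0 : k ≠ 0 := by have := (Finset.mem_Icc.mp hk).1; omega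
  simp [zero_pow hk0]

theorem coeff_succ_eulerPartialProd_succ (a : ℕ → R) (N : ℕ) :
    coeff (N + 1) (eulerPartialProd a (N + 1)) =
      coeff (N + 1) (eulerPartialProd a N) - a (N + 1) := by
  have hsplit : eulerPartialProd a (N + 1) =
      eulerPartialProd a N - (eulerPartialProd a N * C (a (N + 1))) * X ^ (N + 1) := by
    rw [eulerPartialProd, Finset.prod_Icc_succ_top (by omega), ← eulerPartialProd]
    ring
  rw [hsplit, map_sub, coeff_mul_X_pow', if_pos le_rfl, Nat.sub_self, coeff_zero_eq_constantCoeff,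
    map_mul, constantCoeff_eulerPartialProd, constantCoeff_C, one_mul]

theorem eulerPartialProd_congr {a b : ℕ → R} {N : ℕ} (h : ∀ k ≤ N, a k = b k) :
    eulerPartialProd a N = eulerPartialProd b N :=
  Finset.prod_congr rfl fun k hk => by rw [h k (Finset.mem_Icc.mp hk).2]

theorem eq_of_coeff_eulerPartialProd_eq {a b : ℕ → R} (h0 : a 0 = b 0)
    (h : ∀ N, coeff N (eulerPartialProd a N) = coeff N (eulerPartialProd b N)) : a = b := by
  funext N
  induction N using Nat.strong_induction_on with
  | _ N ih =>
    cases N with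
    | zero => exact h0
    | succ N =>
      have hN := h (N + 1)
      rw [coeff_succ_eulerPartialProd_succ, coeff_succ_eulerPartialProd_succ,
        eulerPartialProd_congr fun k hk => ih k (by omega)] at hN
      exact sub_right_injective hN

/-- The exponent sequence `a` of the expansion `f = ∏_{k ≥ 1} (1 - a_k X^k)`. -/
noncomputable def eulerExponents (f : R⟦X⟧) : ℕ → R
  | 0 => 0
  | N + 1 =>
      coeff (N + 1)
          (∏ k ∈ (Finset.Icc 1 N).attach, (1 - C (eulerExponents f k) * X ^ (k : ℕ)))
        - coeff (N + 1) f
decreasing_by have := (Finset.mem_Icc.mp k.2).2; omega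

theorem eulerExponents_zero (f : R⟦X⟧) : eulerExponents f 0 = 0 := by
  rw [eulerExponents]

theorem eulerExponents_succ (f : R⟦X⟧) (N : ℕ) :
    eulerExponents f (N + 1) =
      coeff (N + 1) (eulerPartialProd (eulerExponents f) N) - coeff (N + 1) f := by
  rw [eulerExponents, eulerPartialProd,
    ← Finset.prod_attach (Finset.Icc 1 N) fun k => 1 - C (eulerExponents f k) * X ^ k]

theorem coeff_eulerPartialProd_eulerExponents {f : R⟦X⟧} (hf : constantCoeff f = 1) (N : ℕ) :
    coeff N (eulerPartialProd (eulerExponents f) N) = coeff N f := by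
  cases N with
  | zero => rw [coeff_zero_eq_constantCoeff_apply, coeff_zero_eq_constantCoeff_apply,
      constantCoeff_eulerPartialProd, hf]
  | succ N => rw [coeff_succ_eulerPartialProd_succ, eulerExponents_succ, sub_sub_cancel]

end PowerSeries

theorem powerSeries_prod_decomposition_general (R : Type*) [CommRing R]
    (f : PowerSeries R) (hf : PowerSeries.constantCoeff (R := R) f = 1) :
    ∃! a : ℕ → R, a 0 = 0 ∧ ∀ N : ℕ,
      PowerSeries.coeff (R := R) N f =
        PowerSeries.coeff (R := R) N
          (∏ k ∈ Finset.Icc 1 N, (1 - PowerSeries.C (R := R) (a k) * PowerSeries.X ^ k)) := by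
  have hcoeff := coeff_eulerPartialProd_eulerExponents hf
  refine ⟨eulerExponents f, ⟨eulerExponents_zero f, fun N => (hcoeff N).symm⟩, ?_⟩
  rintro b ⟨hb0, hb⟩
  exact eq_of_coeff_eulerPartialProd_eq (hb0.trans (eulerExponents_zero f).symm)
    fun N => (hb N).symm.trans (hcoeff N).symm

/-- Every power series with constant term 1 over an integral domain has a unique
expansion as an infinite product `∏_{k≥1} (1 - a_k x^k)`, converging coefficientwise:
for each `N`, the coefficient of `x^N` of `f` agrees with that of the partial product
`∏_{1 ≤ k ≤ N} (1 - a_k x^k)` (factors with `k > N` do not affect this coefficient). -/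
theorem powerSeries_prod_decomposition (R : Type*) [CommRing R] [IsDomain R]
    (f : PowerSeries R) (hf : PowerSeries.constantCoeff (R := R) f = 1) :
    ∃! a : ℕ → R, a 0 = 0 ∧ ∀ N : ℕ,
      PowerSeries.coeff (R := R) N f =
        PowerSeries.coeff (R := R) N
          (∏ k ∈ Finset.Icc 1 N, (1 - PowerSeries.C (R := R) (a k) * PowerSeries.X ^ k)) :=
  powerSeries_prod_decomposition_general R f hf
end

section
/- Let p be a prime, a ∈ ℤ_p, and j ∈ ℤ, and consider the power series ∑_{k≥1} j·a^k·x^{jk} (the expansion of j·a·x^j/(1 − a·x^j)). Its coefficients c_n satisfy c_{np} ≡ c_n (mod p^{ν_p(n)+1}) for all n ≥ 1, where ν_p is the p-adic valuation; in particular, they satisfy the Gauss congruences for p. -/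
section Helpers
variable {p : ℕ} [Fact p.Prime]

lemma fermat_padic (x : ℤ_[p]) : (p : ℤ_[p]) ∣ x ^ p - x := by
  rw [← Ideal.mem_span_singleton, ← PadicInt.maximalIdeal_eq_span_p,
    ← PadicInt.ker_toZMod, RingHom.mem_ker]
  simp [ZMod.pow_card]

lemma pow_mul_p_cong (x : ℤ_[p]) (m : ℕ) :
    (p : ℤ_[p]) ^ (m.factorization p + 1) ∣ x ^ (m * p) - x ^ m := by
  rcases Nat.eq_zero_or_pos m with rfl | hm
  · simp
  set μ := m.factorization p with hμ
  set u := m / p ^ μ with hu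
  have hdecomp : m = u * p ^ μ := (Nat.ordProj_mul_ordCompl_eq_self m p).symm.trans (mul_comm _ _)
  have h1 : (p : ℤ_[p]) ∣ x ^ (u * p) - x ^ u := by
    have : (p : ℤ_[p]) ∣ x ^ p - x := fermat_padic x
    have h2 : x ^ p - x ∣ (x ^ p) ^ u - x ^ u := sub_dvd_pow_sub_pow _ _ u
    rw [← pow_mul, mul_comm p u] at h2
    exact this.trans h2
  have := dvd_sub_pow_of_dvd_sub h1 μ
  rw [← pow_mul, ← pow_mul] at this
  have e1 : u * p * p ^ μ = m * p := by rw [hdecomp]; ring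
  have e2 : u * p ^ μ = m := hdecomp.symm
  rwa [e1, e2] at this

lemma main_step (a : ℤ_[p]) (j : ℤ) (hj : 1 ≤ j)
    (c : ℕ → ℤ_[p])
    (hc : ∀ n : ℕ, c n = if j ∣ (n : ℤ) then (j : ℤ_[p]) * a ^ ((n : ℤ) / j).toNat else 0)
    (n : ℕ) (hn : 1 ≤ n) :
    ((p : ℤ_[p])) ^ (n.factorization p + 1) ∣ c (n * p) - c n := by
  have hp : p.Prime := Fact.out
  have hj0 : j ≠ 0 := by omega
  have hjn0 : j.toNat ≠ 0 := by omega
  rw [hc, hc]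
  by_cases hjn : j ∣ (n : ℤ)
  · have hjnp : j ∣ ((n * p : ℕ) : ℤ) := by push_cast; exact hjn.mul_right p
    rw [if_pos hjn, if_pos hjnp]
    obtain ⟨k, hk⟩ := hjn
    have hk0 : 0 ≤ k := by nlinarith [Int.natCast_nonneg n]
    set m := k.toNat with hm
    have hkm : k = (m : ℤ) := (Int.toNat_of_nonneg hk0).symm
    have hnm : (n : ℤ) = j * (m : ℤ) := by rw [hk, hkm]
    have e1 : ((n : ℤ) / j).toNat = m := by
      rw [hnm, Int.mul_ediv_cancel_left _ hj0, Int.toNat_natCast]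
    have e2 : (((n * p : ℕ) : ℤ) / j).toNat = m * p := by
      have : ((n * p : ℕ) : ℤ) = j * ((m * p : ℕ) : ℤ) := by push_cast; rw [hnm]; ring
      rw [this, Int.mul_ediv_cancel_left _ hj0, Int.toNat_natCast]
    rw [e1, e2, ← mul_sub]
    have hnn : n = j.toNat * m := by
      have : (n : ℤ) = ((j.toNat * m : ℕ) : ℤ) := by
        push_cast [Int.toNat_of_nonneg (by omega : (0:ℤ) ≤ j)]; exact hnm
      exact_mod_cast this
    have hm0 : m ≠ 0 := by intro h; rw [h, mul_zero] at hnn; omega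
    have hfact : n.factorization p = j.toNat.factorization p + m.factorization p := by
      rw [hnn, Nat.factorization_mul hjn0 hm0]; simp
    rw [hfact, add_assoc, pow_add]
    apply mul_dvd_mul
    · have h1 : (p : ℕ) ^ (j.toNat.factorization p) ∣ j.toNat := Nat.ordProj_dvd _ p
      have h2 : ((p ^ (j.toNat.factorization p) : ℕ) : ℤ_[p]) ∣ (j.toNat : ℤ_[p]) :=
        Nat.cast_dvd_cast h1
      have hjcast : (j : ℤ_[p]) = (j.toNat : ℤ_[p]) := by
        rw [← Int.cast_natCast, Int.toNat_of_nonneg (by omega : (0:ℤ) ≤ j)]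
      rw [hjcast]
      exact_mod_cast h2
    · exact pow_mul_p_cong a m
  · by_cases hjnp : j ∣ ((n * p : ℕ) : ℤ)
    · rw [if_pos hjnp, if_neg hjn, sub_zero]
      apply dvd_mul_of_dvd_left
      -- work in ℕ
      set jn := j.toNat with hjnt
      have hjcast : (j : ℤ_[p]) = (jn : ℤ_[p]) := by
        rw [← Int.cast_natCast, hjnt, Int.toNat_of_nonneg (by omega : (0:ℤ) ≤ j)]
      have hdn : jn ∣ n * p := by
        have : (jn : ℤ) ∣ ((n*p : ℕ) : ℤ) := by
          rwa [hjnt, Int.toNat_of_nonneg (by omega : (0:ℤ) ≤ j)]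
        exact_mod_cast this
      have hnd : ¬ jn ∣ n := by
        intro h
        exact hjn (by rw [← Int.toNat_of_nonneg (by omega : (0:ℤ) ≤ j)]; exact_mod_cast h)
      set e := jn.factorization p with he
      set u := ordCompl[p] jn with hu
      have hcop : Nat.Coprime p u := Nat.coprime_ordCompl hp hjn0
      have hun : u ∣ n := by
        have : u ∣ n * p := (Nat.ordCompl_dvd jn p).trans hdn
        exact (Nat.Coprime.dvd_of_dvd_mul_right hcop.symm this)
      have hpe : ¬ p ^ e ∣ n := by
        intro h
        apply hnd
        have hcop2 : Nat.Coprime (p ^ e) u := hcop.pow_left _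
        have := hcop2.mul_dvd_of_dvd_of_dvd h hun
        rwa [Nat.ordProj_mul_ordCompl_eq_self jn p] at this
      have hle : n.factorization p + 1 ≤ e := by
        by_contra hcon
        exact hpe ((Nat.Prime.pow_dvd_iff_le_factorization hp (by omega)).mpr (by omega))
      have : (p : ℤ_[p]) ^ (n.factorization p + 1) ∣ (p : ℤ_[p]) ^ e := pow_dvd_pow _ hle
      refine this.trans ?_
      rw [hjcast]
      have : (p : ℕ) ^ e ∣ jn := Nat.ordProj_dvd jn p
      exact_mod_cast (Nat.cast_dvd_cast (α := ℤ_[p]) this : ((p^e : ℕ) : ℤ_[p]) ∣ (jn : ℤ_[p]))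
    · rw [if_neg hjn, if_neg hjnp, sub_zero]
      exact dvd_zero _

end Helpers

/-- The coefficients `c_n` of `∑_{k≥1} j·a^k·x^{jk}` (i.e. of `j·a·x^j/(1-a·x^j)`)
satisfy `c_{np} ≡ c_n (mod p^{ν_p(n)+1})` for all `n ≥ 1`; in particular, the Gauss
congruences for `p`. -/
theorem geometric_logDeriv_gauss (p : ℕ) [Fact p.Prime] (a : ℤ_[p]) (j : ℤ) (hj : 1 ≤ j)
    (c : ℕ → ℤ_[p])
    (hc : ∀ n : ℕ, c n = if j ∣ (n : ℤ) then (j : ℤ_[p]) * a ^ ((n : ℤ) / j).toNat else 0) :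
    (∀ n : ℕ, 1 ≤ n → ((p : ℤ_[p])) ^ (n.factorization p + 1) ∣ c (n * p) - c n) ∧
    (∀ m r : ℕ, 1 ≤ m → 1 ≤ r →
      ((p : ℤ_[p])) ^ r ∣ c (m * p ^ r) - c (m * p ^ (r - 1))) := by
  have hp : p.Prime := Fact.out
  refine ⟨main_step a j hj c hc, ?_⟩
  intro m r hm hr
  set n := m * p ^ (r - 1) with hn
  have hn1 : 1 ≤ n := Nat.one_le_iff_ne_zero.mpr (Nat.mul_ne_zero (by omega) (pow_ne_zero _ hp.pos.ne'))
  have h1 : m * p ^ r = n * p := by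
    rw [hn, mul_assoc, ← pow_succ]; congr 2; omega
  have h2 : r ≤ n.factorization p + 1 := by
    have hd : p ^ (r - 1) ∣ n := dvd_mul_left (p ^ (r - 1)) m
    have := (Nat.Prime.pow_dvd_iff_le_factorization hp (by omega)).mp hd
    omega
  rw [h1]
  exact (pow_dvd_pow _ h2).trans (main_step a j hj c hc n hn1)
end

section
/- Let p be a prime, g ∈ ℤ_p[[z]], and let ℓ be an integer divisible by p. Then every coefficient of the power series (g(z)^ℓ − g(z^p)^{ℓ/p})/ℓ is a p-adic integer. -/
/-!
Writing `h = g(z^p)`, the Frobenius congruence `g(z)^p ≡ g(z^p) (mod p)` comes from reducing to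
`𝔽_p[[z]]`, where `f^p = f(z^p)`. Put `a = g^p`, `b = h` and `ℓ' = p^k m` with `p ∤ m`. Then
`p ∣ a - b` lifts to `p^(k+1) ∣ a^(p^k) - b^(p^k)`, hence `p^(k+1) ∣ a^ℓ' - b^ℓ' = g^ℓ - h^ℓ'`,
and `ℓ = p^(k+1) m` differs from `p^(k+1)` by a unit of `ℤ_p`.
-/

open PowerSeries

namespace PowerSeries

theorem C_dvd_iff_dvd_coeff {R : Type*} [CommRing R] (r : R) (φ : R⟦X⟧) :
    C r ∣ φ ↔ ∀ n, r ∣ coeff n φ := by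
  refine ⟨fun ⟨ψ, hψ⟩ n ↦ ⟨coeff n ψ, by rw [hψ, coeff_C_mul]⟩, fun h ↦ ?_⟩
  choose c hc using h
  exact ⟨mk c, ext fun n ↦ by rw [coeff_C_mul, coeff_mk, hc]⟩

theorem expand_eq_pow_of_zmod {p : ℕ} [Fact p.Prime] (f : (ZMod p)⟦X⟧) :
    expand p (Fact.out : p.Prime).ne_zero f = f ^ p := by
  have := MvPowerSeries.map_frobenius_expand p (Fact.out : p.Prime).ne_zero (f := f)
  rwa [ZMod.frobenius_zmod, MvPowerSeries.map_id] at this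

end PowerSeries

namespace PadicInt

variable {p : ℕ} [Fact p.Prime]

theorem natCast_dvd_iff_toZMod_eq_zero (x : ℤ_[p]) : (p : ℤ_[p]) ∣ x ↔ toZMod x = 0 := by
  rw [← Ideal.mem_span_singleton, ← maximalIdeal_eq_span_p, ← ker_toZMod, RingHom.mem_ker]

theorem isUnit_natCast_of_not_dvd {m : ℕ} (hm : ¬p ∣ m) : IsUnit (m : ℤ_[p]) := by
  rw [isUnit_iff, norm_natCast_eq_one_iff]
  exact (Fact.out : p.Prime).coprime_iff_not_dvd.mpr hm

theorem natCast_dvd_pow_sub_expand (g : ℤ_[p]⟦X⟧) :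
    (p : ℤ_[p]⟦X⟧) ∣ g ^ p - expand p (Fact.out : p.Prime).ne_zero g := by
  rw [← map_natCast C, C_dvd_iff_dvd_coeff]
  intro n
  rw [natCast_dvd_iff_toZMod_eq_zero, ← coeff_map, map_sub, map_pow, map_expand,
    expand_eq_pow_of_zmod, sub_self, map_zero]

theorem natCast_mul_dvd_pow_sub_pow {R : Type*} [CommRing R] [Algebra ℤ_[p] R] {a b : R}
    (hab : (p : R) ∣ a - b) (n : ℕ) : ((p * n : ℕ) : R) ∣ a ^ n - b ^ n := by
  rcases eq_or_ne n 0 with rfl | hn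
  · simp
  obtain ⟨k, m, hpm, rfl⟩ := Nat.exists_eq_pow_mul_and_not_dvd hn p (Fact.out : p.Prime).ne_one
  have hm : IsUnit (m : R) := by
    simpa using (isUnit_natCast_of_not_dvd hpm).map (algebraMap ℤ_[p] R)
  have hcast : ((p * (p ^ k * m) : ℕ) : R) = (p : R) ^ (k + 1) * m := by
    push_cast; ring
  rw [hcast, hm.mul_right_dvd, pow_mul, pow_mul]
  exact (dvd_sub_pow_of_dvd_sub hab k).trans (sub_dvd_pow_sub_pow _ _ m)

end PadicInt

theorem coeff_pow_sub_pow_div_general (p : ℕ) [Fact p.Prime] (g h : PowerSeries ℤ_[p])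
    (ℓ ℓ' : ℕ) (hℓ : ℓ = p * ℓ')
    (hh : ∀ n : ℕ, PowerSeries.coeff n h =
      if p ∣ n then PowerSeries.coeff (n / p) g else 0) :
    ∀ n : ℕ, ((ℓ : ℤ_[p])) ∣ PowerSeries.coeff n (g ^ ℓ - h ^ ℓ') := by
  have h_expand : h = expand p (Fact.out : p.Prime).ne_zero g :=
    ext fun n ↦ by rw [hh, coeff_expand]
  have hdvd := PadicInt.natCast_mul_dvd_pow_sub_pow
    (h_expand ▸ PadicInt.natCast_dvd_pow_sub_expand g) ℓ'
  rwa [← hℓ, ← pow_mul, ← hℓ, ← map_natCast C, C_dvd_iff_dvd_coeff] at hdvd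

/-- If `g ∈ ℤ_p[[z]]`, `ℓ = p·ℓ'` with `ℓ ≥ 1`, and `h(z) = g(z^p)`, then every
coefficient of `g(z)^ℓ − g(z^p)^{ℓ'}` is divisible by `ℓ` (equivalently, the
coefficients of `(g(z)^ℓ − g(z^p)^{ℓ/p})/ℓ` are `p`-adic integers). -/
theorem coeff_pow_sub_pow_div (p : ℕ) [Fact p.Prime] (g h : PowerSeries ℤ_[p])
    (ℓ ℓ' : ℕ) (hℓ : ℓ = p * ℓ') (hℓpos : 1 ≤ ℓ)
    (hh : ∀ n : ℕ, PowerSeries.coeff n h =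
      if p ∣ n then PowerSeries.coeff (n / p) g else 0) :
    ∀ n : ℕ, ((ℓ : ℤ_[p])) ∣ PowerSeries.coeff n (g ^ ℓ - h ^ ℓ') :=
  coeff_pow_sub_pow_div_general p g h ℓ ℓ' hℓ hh
end

section
/- Let f ∈ ℚ(x) be a rational function that is a ℚ-linear combination of a constant and functions of the form x·u'(x)/u(x) with u ∈ ℚ[x], u(0) = 1. Then the Taylor coefficients a_n of f at 0 satisfy: for all but finitely many primes p, a_n ∈ ℤ_p for all n, and a_{mp^r} ≡ a_{mp^{r-1}} (mod p^r) for all m ≥ 1 and r ≥ 1. -/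
/-!
For `v ∈ ℤ_p[X]` with `v(0) = 1`, Frobenius gives `v(X^p) = v^p (1 + p w)` with `w(0) = 0`.
Taking logarithmic derivatives, `g = X v'/v` satisfies `g(X^p) - g = X w'/(1 + p w) = X H'`, where
`H = log(1 + p w)/p = ∑ (-p)^k w^(k+1)/(k+1)` has coefficients in `ℤ_p` because `k + 1 ∣ p^k` there.
Comparing coefficients of `X^(m p^r)` gives `g_(m p^(r-1)) - g_(m p^r) = m p^r H_(m p^r)`.
For every prime not dividing a denominator of `c0`, the `c i` or the coefficients of the `u i`,
`f` is a `ℤ_p`-linear combination of a constant and such series `g`.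
-/

open Polynomial

/-- The Taylor coefficients of `f` at `0` (as Laurent series coefficients). -/
noncomputable def taylorCoeff (f : RatFunc ℚ) (n : ℤ) : ℚ :=
  ((f : LaurentSeries ℚ)).coeff n

/-- `a` satisfies the Gauss congruences for `p`: all coefficients are `p`-adically
integral and `a_{mp^r} ≡ a_{mp^{r-1}} (mod p^r)`. -/
def SatisfiesGauss (p : ℕ) (a : ℤ → ℚ) : Prop :=
  (∀ n : ℤ, a n ≠ 0 → 0 ≤ padicValRat p (a n)) ∧
  ∀ m r : ℕ, 1 ≤ m → 1 ≤ r →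
    (a (m * p ^ r) = a (m * p ^ (r - 1)) ∨
      (r : ℤ) ≤ padicValRat p (a (m * p ^ r) - a (m * p ^ (r - 1))))

open scoped PowerSeries LaurentSeries

namespace PowerSeries

variable {R : Type*} [CommRing R]

variable (R) in
def gaussSubmodule (p : ℕ) : Submodule R R⟦X⟧ where
  carrier := {g | ∀ m r : ℕ, 1 ≤ m → 1 ≤ r →
    (p : R) ^ r ∣ coeff (m * p ^ r) g - coeff (m * p ^ (r - 1)) g}
  add_mem' {f g} hf hg m r hm hr := by
    simpa only [map_add, add_sub_add_comm] using dvd_add (hf m r hm hr) (hg m r hm hr)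
  zero_mem' m r _ _ := by simp
  smul_mem' c g hg m r hm hr := by
    simpa only [coeff_smul, smul_eq_mul, ← mul_sub] using (hg m r hm hr).mul_left c

theorem C_mem_gaussSubmodule {p : ℕ} (hp : p ≠ 0) (c : R) : C c ∈ gaussSubmodule R p := by
  intro m r _ _
  simp [coeff_C, hp]

theorem mem_gaussSubmodule_of_expand_sub_eq {p : ℕ} (hp : p ≠ 0) {g H : R⟦X⟧}
    (h : expand p hp g - g = X * d⁄dX R H) : g ∈ gaussSubmodule R p := by
  intro m r hm hr
  obtain ⟨n, hn⟩ : ∃ n, m * p ^ r = n + 1 := Nat.exists_eq_add_one.2 (by positivity)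
  have hcoeff := congrArg (coeff (m * p ^ r)) h
  have hmul : m * p ^ r = p * (m * p ^ (r - 1)) := by
    rw [mul_left_comm, ← pow_succ', Nat.sub_add_cancel hr]
  rw [map_sub, hmul, coeff_expand_mul, ← hmul, hn, coeff_succ_X_mul, coeff_derivative,
    ← hn] at hcoeff
  refine ⟨-(m * coeff (m * p ^ r) H), ?_⟩
  have hcast : (n : R) + 1 = m * p ^ r := by exact_mod_cast congrArg (Nat.cast (R := R)) hn.symm
  rw [← neg_sub, hcoeff, hcast]
  ring

theorem derivative_expand {p : ℕ} (hp : p ≠ 0) (f : R⟦X⟧) :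
    d⁄dX R (expand p hp f) = C (p : R) * X ^ (p - 1) * expand p hp (d⁄dX R f) := by
  rw [expand_apply, expand_apply, derivative_subst (HasSubst.X_pow hp), derivative_pow,
    derivative_X, map_natCast]
  ring

theorem expand_coe {p : ℕ} (hp : p ≠ 0) (f : R[X]) :
    expand p hp (f : R⟦X⟧) = (Polynomial.expand R p f : R⟦X⟧) := by
  ext n
  rw [coeff_expand, Polynomial.coeff_coe, Polynomial.coeff_coe,
    Polynomial.coeff_expand (Nat.pos_of_ne_zero hp)]

/-- The witness is `H = log (1 + a w) / a = ∑ (-a)^k w^(k+1) / (k+1)`. -/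
theorem exists_one_add_C_mul_mul_derivative_eq {a : R} (ha : ∀ k : ℕ, ((k + 1 : ℕ) : R) ∣ a ^ k)
    {w : R⟦X⟧} (hw : constantCoeff w = 0) :
    ∃ H : R⟦X⟧, (1 + C a * w) * d⁄dX R H = d⁄dX R w := by
  have hb : ∀ k : ℕ, ∃ b : R, ((k + 1 : ℕ) : R) * b = (-a) ^ k := fun k => by
    obtain ⟨b, hb⟩ := ha k
    exact ⟨(-1) ^ k * b, by rw [neg_pow a, hb]; ring⟩
  choose b hb using hb
  set L : R⟦X⟧ := mk fun n => if n = 0 then 0 else b (n - 1)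
  have hL : (1 + C a * X) * d⁄dX R L = 1 := by
    have hdL : d⁄dX R L = rescale (-a) (mk 1) := by
      ext n
      simp [L, coeff_derivative, coeff_rescale, ← hb n, mul_comm]
    have hX : 1 + C a * X = rescale (-a) (1 - X) := by
      simp [rescale_X]
    rw [hdL, hX, ← map_mul, mul_comm, mk_one_mul_one_sub_eq_one, map_one]
  have hsub := HasSubst.of_constantCoeff_zero' hw
  refine ⟨L.subst w, ?_⟩
  have hw' : 1 + C a * w = substAlgHom hsub (1 + C a * X) := by
    rw [map_add, map_one, map_mul, substAlgHom_X, ← algebraMap_eq, AlgHom.commutes]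
  rw [derivative_subst hsub, ← mul_assoc, hw', ← coe_substAlgHom hsub, ← map_mul, hL, map_one,
    one_mul]

theorem one_add_C_mul_mul_expand_sub_eq [IsDomain R] [CharZero R] {p : ℕ} (hp : p ≠ 0)
    {a b w : R⟦X⟧} (hab : a * b = 1) (ha : expand p hp a = a ^ p * (1 + C (p : R) * w)) :
    (1 + C (p : R) * w) * (expand p hp (X * d⁄dX R a * b) - X * d⁄dX R a * b) =
      X * d⁄dX R w := by
  obtain ⟨q, rfl⟩ := Nat.exists_eq_add_one.2 (Nat.pos_of_ne_zero hp)
  have hp' : C ((q + 1 : ℕ) : R) ≠ 0 :=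
    (map_ne_zero_iff _ (C_injective (R := R))).2 (Nat.cast_ne_zero.2 hp)
  have hderiv := congrArg (d⁄dX R) ha
  rw [derivative_expand, Derivation.leibniz, derivative_pow, map_add, Derivation.leibniz,
    derivative_C, derivative_one] at hderiv
  simp only [smul_eq_mul, Nat.add_sub_cancel] at hderiv
  have h1 : X ^ q * expand (q + 1) hp (d⁄dX R a) =
      a ^ q * d⁄dX R a * (1 + C ((q + 1 : ℕ) : R) * w) + a ^ (q + 1) * d⁄dX R w := by
    refine mul_left_cancel₀ hp' ?_
    rw [map_natCast] at hderiv ⊢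
    linear_combination hderiv
  have hEe : expand (q + 1) hp a * expand (q + 1) hp b = 1 := by
    rw [← map_mul, hab, map_one]
  rw [map_mul, map_mul, expand_X]
  linear_combination (1 + C ((q + 1 : ℕ) : R) * w) * expand (q + 1) hp b * X * h1
    - (X * d⁄dX R a * (1 + C ((q + 1 : ℕ) : R) * w) * b * expand (q + 1) hp b
      + X * d⁄dX R w * expand (q + 1) hp b) * ha
    + (X * d⁄dX R a * (1 + C ((q + 1 : ℕ) : R) * w) * b + X * d⁄dX R w) * hEe
    - (X * d⁄dX R a * (1 + C ((q + 1 : ℕ) : R) * w) ^ 2 * expand (q + 1) hp b * a ^ q) *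
      hab

theorem map_mul_inv_eq_of_mul_eq {K L : Type*} [Field K] [Field L] (φ : K →+* L) {P Q : K⟦X⟧}
    (hQ : constantCoeff Q ≠ 0) {G : L⟦X⟧} (h : G * map φ Q = map φ P) :
    map φ (P * Q⁻¹) = G := by
  have hφQ : map φ Q ≠ 0 := fun h0 => hQ <| by
    have h00 := congrArg (coeff 0) h0
    rw [coeff_map, coeff_zero_eq_constantCoeff_apply, map_zero] at h00
    exact (map_eq_zero_iff φ φ.injective).1 h00
  refine mul_right_cancel₀ hφQ ?_
  rw [h, ← map_mul, mul_assoc, PowerSeries.inv_mul_cancel _ hQ, mul_one]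

end PowerSeries

namespace PadicInt

variable {p : ℕ} [Fact p.Prime]

theorem natCast_succ_dvd_pow (k : ℕ) : ((k + 1 : ℕ) : ℤ_[p]) ∣ (p : ℤ_[p]) ^ k := by
  set x : ℤ_[p] := ((k + 1 : ℕ) : ℤ_[p])
  have hx : x ≠ 0 := Nat.cast_ne_zero.2 k.succ_ne_zero
  have hv : x.valuation ≤ k := by
    have h := valuation_coe x
    rw [coe_natCast, Padic.valuation_natCast, Nat.cast_inj] at h
    have := (padicValNat_le_nat_log (p := p) (k + 1)).trans_lt (Nat.log_lt_self p k.succ_ne_zero)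
    omega
  calc x ∣ (p : ℤ_[p]) ^ x.valuation := by
        nth_rewrite 1 [unitCoeff_spec hx]
        exact Units.mul_left_dvd.2 dvd_rfl
    _ ∣ (p : ℤ_[p]) ^ k := pow_dvd_pow _ hv

theorem exists_expand_eq_pow_add (v : ℤ_[p][X]) :
    ∃ W : ℤ_[p][X],
      Polynomial.expand ℤ_[p] p v = v ^ p + Polynomial.C (p : ℤ_[p]) * W := by
  suffices Polynomial.C (p : ℤ_[p]) ∣ Polynomial.expand ℤ_[p] p v - v ^ p by
    obtain ⟨W, hW⟩ := this
    exact ⟨W, by rw [← hW, add_sub_cancel]⟩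
  rw [Polynomial.C_dvd_iff_dvd_coeff]
  intro n
  rw [← Ideal.mem_span_singleton, ← maximalIdeal_eq_span_p, ← ker_toZMod, RingHom.mem_ker,
    ← Polynomial.coeff_map, Polynomial.map_sub, Polynomial.map_expand, Polynomial.map_pow,
    ← Polynomial.map_frobenius_expand, ZMod.frobenius_zmod, Polynomial.map_id, sub_self,
    Polynomial.coeff_zero]

theorem le_padicValRat_of_ratCast_eq {q : ℚ} (hq : q ≠ 0) {r : ℕ} {z : ℤ_[p]}
    (h : (q : ℚ_[p]) = ((p : ℤ_[p]) ^ r * z : ℤ_[p])) : (r : ℤ) ≤ padicValRat p q := by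
  have hz : z ≠ 0 := by
    rintro rfl
    rw [mul_zero, coe_zero, Rat.cast_eq_zero] at h
    exact hq h
  rw [← Padic.valuation_ratCast, h, valuation_coe, valuation_p_pow_mul _ _ hz]
  omega

theorem exists_map_coe_eq_map_ratCast {u : ℚ[X]} (hu : ∀ k, ‖(u.coeff k : ℚ_[p])‖ ≤ 1) :
    ∃ v : ℤ_[p][X], v.map Coe.ringHom = u.map (Rat.castHom ℚ_[p]) :=
  Polynomial.mem_lifts _ |>.1 <| (Polynomial.lifts_iff_coeff_lifts _).2 fun k =>
    ⟨⟨_, hu k⟩, by simp [Polynomial.coeff_map]; rfl⟩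

end PadicInt

namespace PowerSeries

variable {p : ℕ} [hp : Fact p.Prime]

theorem X_mul_derivative_mul_mem_gaussSubmodule {v : ℤ_[p][X]} (hv : v.coeff 0 = 1)
    {b : ℤ_[p]⟦X⟧} (hb : (v : ℤ_[p]⟦X⟧) * b = 1) :
    X * d⁄dX ℤ_[p] (v : ℤ_[p]⟦X⟧) * b ∈ gaussSubmodule ℤ_[p] p := by
  have hp0 := hp.out.ne_zero
  obtain ⟨W, hW⟩ := PadicInt.exists_expand_eq_pow_add v
  set w : ℤ_[p]⟦X⟧ := W * b ^ p
  have hexp : expand p hp0 (v : ℤ_[p]⟦X⟧) = v ^ p * (1 + C (p : ℤ_[p]) * w) := by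
    rw [expand_coe, hW, Polynomial.coe_add, Polynomial.coe_pow, Polynomial.coe_mul,
      Polynomial.coe_C]
    linear_combination (-(C (p : ℤ_[p]) * W)) * congrArg (· ^ p) hb
  have hw0 : constantCoeff w = 0 := by
    have h := congrArg constantCoeff hexp
    simpa [hv, hp0] using h
  obtain ⟨H, hH⟩ := exists_one_add_C_mul_mul_derivative_eq PadicInt.natCast_succ_dvd_pow hw0
  refine mem_gaussSubmodule_of_expand_sub_eq hp0 (H := H) ?_
  have hunit : 1 + C (p : ℤ_[p]) * w ≠ 0 := fun h => by
    simpa [hw0] using congrArg constantCoeff h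
  apply mul_left_cancel₀ hunit
  rw [one_add_C_mul_mul_expand_sub_eq hp0 hb hexp, ← hH]
  ring

end PowerSeries

theorem RatFunc.coe_algebraMap_div_algebraMap {K : Type*} [Field K] (P Q : K[X])
    (hQ : Q.coeff 0 ≠ 0) :
    ((algebraMap K[X] (RatFunc K) P / algebraMap K[X] (RatFunc K) Q : RatFunc K) : K⸨X⸩) =
      HahnSeries.ofPowerSeries ℤ K (P * (Q : K⟦X⟧)⁻¹) := by
  have hQ' : PowerSeries.constantCoeff (Q : K⟦X⟧) ≠ 0 := by rwa [Polynomial.constantCoeff_coe]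
  have hQne : HahnSeries.ofPowerSeries ℤ K (Q : K⟦X⟧) ≠ 0 := by
    rw [map_ne_zero_iff _ HahnSeries.ofPowerSeries_injective]
    exact fun h => hQ' (by rw [h, map_zero])
  rw [RatFunc.algebraMap_apply_div, Polynomial.algebraMap_hahnSeries_apply,
    Polynomial.algebraMap_hahnSeries_apply, div_eq_iff hQne, ← map_mul, mul_assoc,
    PowerSeries.inv_mul_cancel _ hQ', mul_one]

def HasIntegralGaussExpansion (p : ℕ) [Fact p.Prime] (f : RatFunc ℚ) : Prop :=
  ∃ F : ℚ⟦X⟧, ∃ G ∈ PowerSeries.gaussSubmodule ℤ_[p] p,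
    (f : ℚ⸨X⸩) = HahnSeries.ofPowerSeries ℤ ℚ F ∧
      F.map (Rat.castHom ℚ_[p]) = G.map PadicInt.Coe.ringHom

namespace HasIntegralGaussExpansion

variable {p : ℕ} [hp : Fact p.Prime]

theorem zero : HasIntegralGaussExpansion p 0 :=
  ⟨0, 0, zero_mem _, by simp, by simp⟩

theorem add {f g : RatFunc ℚ} (hf : HasIntegralGaussExpansion p f)
    (hg : HasIntegralGaussExpansion p g) : HasIntegralGaussExpansion p (f + g) := by
  obtain ⟨F, G, hG, hfF, hFG⟩ := hf
  obtain ⟨F', G', hG', hgF', hFG'⟩ := hg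
  exact ⟨F + F', G + G', add_mem hG hG', by rw [map_add, map_add, hfF, hgF'],
    by rw [map_add, map_add, hFG, hFG']⟩

theorem C {c : ℚ} (hc : ‖(c : ℚ_[p])‖ ≤ 1) : HasIntegralGaussExpansion p (RatFunc.C c) := by
  obtain ⟨z, hz⟩ : ∃ z : ℤ_[p], (z : ℚ_[p]) = c := ⟨⟨c, hc⟩, rfl⟩
  refine ⟨PowerSeries.C c, PowerSeries.C z, PowerSeries.C_mem_gaussSubmodule hp.out.ne_zero _,
    by simp, ?_⟩
  rw [PowerSeries.map_C, PowerSeries.map_C]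
  exact congrArg _ hz.symm

theorem C_mul_X_mul_derivative_div {c : ℚ} (hc : ‖(c : ℚ_[p])‖ ≤ 1) {u : ℚ[X]}
    (hu : ∀ k, ‖(u.coeff k : ℚ_[p])‖ ≤ 1) (hu0 : u.coeff 0 = 1) :
    HasIntegralGaussExpansion p (RatFunc.C c * (RatFunc.X *
      algebraMap ℚ[X] (RatFunc ℚ) (derivative u) / algebraMap ℚ[X] (RatFunc ℚ) u)) := by
  obtain ⟨z, hz⟩ : ∃ z : ℤ_[p], (z : ℚ_[p]) = c := ⟨⟨c, hc⟩, rfl⟩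
  obtain ⟨v, hv⟩ := PadicInt.exists_map_coe_eq_map_ratCast hu
  have hv0 : v.coeff 0 = 1 := by
    have h := congrArg (Polynomial.coeff · 0) hv
    simp only [Polynomial.coeff_map, hu0, map_one] at h
    exact Subtype.ext h
  have hb : (v : ℤ_[p]⟦X⟧) * PowerSeries.invOfUnit v 1 = 1 :=
    PowerSeries.mul_invOfUnit _ _ (by simp [hv0])
  have hu0' : PowerSeries.constantCoeff (u : ℚ⟦X⟧) ≠ 0 := by simp [hu0]
  refine ⟨(Polynomial.C c * Polynomial.X * derivative u : ℚ[X]) * (u : ℚ⟦X⟧)⁻¹,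
    z • (PowerSeries.X * d⁄dX ℤ_[p] v * PowerSeries.invOfUnit v 1),
    Submodule.smul_mem _ _ (PowerSeries.X_mul_derivative_mul_mem_gaussSubmodule hv0 hb), ?_, ?_⟩
  · rw [← RatFunc.coe_algebraMap_div_algebraMap _ _ (by simpa using hu0')]
    congr 1
    simp only [map_mul, RatFunc.algebraMap_C, RatFunc.algebraMap_X]
    ring
  · refine PowerSeries.map_mul_inv_eq_of_mul_eq _ hu0' ?_
    rw [← Polynomial.polynomial_map_coe, ← Polynomial.polynomial_map_coe, ← hv,
      Polynomial.polynomial_map_coe, ← map_mul, smul_mul_assoc, mul_assoc, mul_assoc,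
      mul_comm (PowerSeries.invOfUnit _ _), hb, mul_one, Polynomial.map_mul, Polynomial.map_mul,
      Polynomial.map_C, Polynomial.map_X, ← Polynomial.derivative_map, ← hv,
      Polynomial.derivative_map, PowerSeries.smul_eq_C_mul, map_mul, map_mul, PowerSeries.map_C,
      PowerSeries.map_X, PowerSeries.derivative_coe, Polynomial.coe_mul, Polynomial.coe_mul,
      Polynomial.coe_C, Polynomial.coe_X, Polynomial.polynomial_map_coe,
      show Rat.castHom ℚ_[p] c = PadicInt.Coe.ringHom z from hz.symm]
    ring

theorem satisfiesGauss {f : RatFunc ℚ} (hf : HasIntegralGaussExpansion p f) :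
    SatisfiesGauss p (taylorCoeff f) := by
  obtain ⟨F, G, hG, hfF, hFG⟩ := hf
  have hcoeff (n : ℕ) :
      (taylorCoeff f n : ℚ_[p]) = ((PowerSeries.coeff n G : ℤ_[p]) : ℚ_[p]) := by
    rw [taylorCoeff, hfF, LaurentSeries.coeff_coe_powerSeries]
    have h := congrArg (PowerSeries.coeff n) hFG
    rwa [PowerSeries.coeff_map, PowerSeries.coeff_map] at h
  refine ⟨fun n hn => ?_, fun m r hm hr => ?_⟩
  · lift n to ℕ using not_lt.1 fun hneg => hn (by
      rw [taylorCoeff, hfF, PowerSeries.coeff_coe, if_pos hneg])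
    exact_mod_cast PadicInt.le_padicValRat_of_ratCast_eq hn (r := 0)
      (by rw [hcoeff, pow_zero, one_mul])
  · obtain ⟨z, hz⟩ := hG m r hm hr
    refine or_iff_not_imp_left.2 fun hne => PadicInt.le_padicValRat_of_ratCast_eq
      (sub_ne_zero.2 hne) (z := z) ?_
    rw [← hz, Rat.cast_sub, PadicInt.coe_sub]
    exact_mod_cast congrArg₂ (· - ·) (hcoeff (m * p ^ r)) (hcoeff (m * p ^ (r - 1)))

end HasIntegralGaussExpansion

/-- If `f ∈ ℚ(x)` is a `ℚ`-linear combination of a constant and functions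
`x·u'(x)/u(x)` with `u ∈ ℚ[x]`, `u(0) = 1`, then the Taylor coefficients of `f`
satisfy the Gauss congruences for all but finitely many primes. -/
theorem minton_if_direction (f : RatFunc ℚ) (ι : Type) (s : Finset ι)
    (c0 : ℚ) (c : ι → ℚ) (u : ι → Polynomial ℚ) (hu : ∀ i ∈ s, (u i).eval 0 = 1)
    (hf : f = RatFunc.C c0 + ∑ i ∈ s, RatFunc.C (c i) *
      (RatFunc.X * algebraMap (Polynomial ℚ) (RatFunc ℚ) (derivative (u i)) /
        algebraMap (Polynomial ℚ) (RatFunc ℚ) (u i))) :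
    {p : ℕ | p.Prime ∧ ¬ SatisfiesGauss p (taylorCoeff f)}.Finite := by
  classical
  set Q : Finset ℚ := insert c0 (s.image c ∪ s.biUnion fun i => (u i).coeffs)
  refine (∏ q ∈ Q, q.den).primeFactors.finite_toSet.subset ?_
  rintro p ⟨hp, hnot⟩
  have : Fact p.Prime := ⟨hp⟩
  by_contra hgood
  have hQ : ∀ q ∈ Q, ‖(q : ℚ_[p])‖ ≤ 1 := fun q hq => Padic.norm_rat_le_one fun hdvd =>
    hgood <| Nat.mem_primeFactors.2 ⟨hp, hdvd.trans (Finset.dvd_prod_of_mem _ hq),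
      Finset.prod_ne_zero_iff.2 fun q _ => q.den_ne_zero⟩
  have hcoeff (i) (hi : i ∈ s) (k : ℕ) : ‖((u i).coeff k : ℚ_[p])‖ ≤ 1 := by
    by_cases h : (u i).coeff k = 0
    · simp [h]
    · exact hQ _ <| Finset.mem_insert_of_mem <| Finset.mem_union_right _ <|
        Finset.mem_biUnion.2 ⟨i, hi, Polynomial.coeff_mem_coeffs h⟩
  refine hnot (HasIntegralGaussExpansion.satisfiesGauss ?_)
  rw [hf]
  refine (HasIntegralGaussExpansion.C (hQ c0 (Finset.mem_insert_self _ _))).add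
    (Finset.sum_induction _ _ (fun _ _ => HasIntegralGaussExpansion.add)
      HasIntegralGaussExpansion.zero fun i hi => ?_)
  exact HasIntegralGaussExpansion.C_mul_X_mul_derivative_div
    (hQ _ <| Finset.mem_insert_of_mem <| Finset.mem_union_left _ <| Finset.mem_image_of_mem c hi)
    (hcoeff i hi)
    (by rw [Polynomial.coeff_zero_eq_eval_zero]; exact hu i hi)
end

section
/- Let f = P/Q ∈ ℚ(x) with P, Q ∈ ℤ[x], Q(0) ≠ 0, and suppose the Taylor coefficients a_n of f satisfy a_{np} ≡ a_n (mod p) for almost all primes p. Then all poles of f are simple. -/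
open Polynomial

/-- `a` is `p`-adically integral and satisfies `a_{np} ≡ a_n (mod p)`. -/
def SatisfiesModP (p : ℕ) (a : ℤ → ℚ) : Prop :=
  (∀ n : ℤ, a n ≠ 0 → 0 ≤ padicValRat p (a n)) ∧
  ∀ n : ℕ, a (n * p) = a n ∨ (1 : ℤ) ≤ padicValRat p (a (n * p) - a n)

open scoped PowerSeries LaurentSeries

/-!
Reduce modulo a prime `p` for which the congruences hold and all the data (numerator `N`,
denominator `D`, a Bézout relation between them, a monic `w` with `w² ∣ D`) are `p`-integral.
Over `𝔽_p` the congruences say that `F = N / D` is fixed by the Cartier operator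
`Λ (∑ aₙ xⁿ) = ∑ a_{np} xⁿ`, which satisfies `Λ (g(xᵖ) h) = g Λ h`. Since `Dᵖ = D(xᵖ)` in `𝔽_p[x]`,
`N Dᵖ⁻¹ = D(xᵖ) F`, hence `Λ (N Dᵖ⁻¹) = D F = N`. If `D = w² s`, then also
`N Dᵖ⁻¹ = w(xᵖ) · N wᵖ⁻² sᵖ⁻¹`, so `w` divides `N`. Being a common factor of `N` and `D`, `w` is a
unit mod `p`; as it is monic, `w = 1`.
-/

theorem PowerSeries.coeff_mul_expand_coe_of_coeff_mul_eq {R : Type*} [CommSemiring R] {p : ℕ}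
    (hp : 0 < p) {F : R⟦X⟧} (hF : ∀ n, coeff (n * p) F = coeff n F) (g : R[X]) (n : ℕ) :
    coeff (n * p) ((Polynomial.expand R p g : R⟦X⟧) * F) = coeff n ((g : R⟦X⟧) * F) := by
  induction g using Polynomial.induction_on' with
  | add g h hg hh => simp only [map_add, Polynomial.coe_add, add_mul, hg, hh]
  | monomial i a =>
    rw [Polynomial.expand_monomial, ← C_mul_X_pow_eq_monomial, ← C_mul_X_pow_eq_monomial]
    push_cast
    simp only [mul_assoc, PowerSeries.coeff_C_mul, PowerSeries.coeff_X_pow_mul',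
      Nat.mul_le_mul_right_iff hp, ← Nat.sub_mul, hF]

theorem ZMod.squarefree_of_mul_eq_of_coeff_mul_eq {p : ℕ} [Fact p.Prime] {N D : (ZMod p)[X]}
    {F : (ZMod p)⟦X⟧} (hFD : F * D = N) (hND : IsCoprime N D)
    (hF : ∀ n, PowerSeries.coeff (n * p) F = PowerSeries.coeff n F) : Squarefree D := by
  have hp := (Fact.out : p.Prime)
  have hcoeff : ∀ n, (N * D ^ (p - 1)).coeff (n * p) = N.coeff n := by
    intro n
    have hB : (↑(N * D ^ (p - 1)) : (ZMod p)⟦X⟧) = ↑(expand (ZMod p) p D) * F := by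
      rw [ZMod.expand_card]
      push_cast
      rw [← hFD, ← pow_sub_one_mul hp.ne_zero]
      ring
    rw [← Polynomial.coeff_coe, hB, PowerSeries.coeff_mul_expand_coe_of_coeff_mul_eq hp.pos hF,
      mul_comm, hFD, Polynomial.coeff_coe]
  have hcontract : contract p (N * D ^ (p - 1)) = N := by
    ext n
    rw [coeff_contract hp.ne_zero, hcoeff]
  rintro w ⟨s, rfl⟩
  obtain ⟨k, rfl⟩ : ∃ k, p = k + 2 := ⟨p - 2, by have := hp.two_le; omega⟩
  have hexpand :
      N * (w * w * s) ^ (k + 2 - 1) = N * w ^ k * s ^ (k + 1) * expand _ (k + 2) w := by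
    rw [ZMod.expand_card, show k + 2 - 1 = k + 1 by omega]
    ring
  rw [hexpand, contract_mul_expand hp.ne_zero] at hcontract
  exact hND.isUnit_of_dvd' (Dvd.intro_left _ hcontract) (dvd_mul_of_dvd_left (dvd_mul_right w w) s)

theorem Polynomial.Monic.eq_one_of_mul_self_dvd_of_ringHom {O : Type*} [CommRing O] {p : ℕ}
    [Fact p.Prime] (φ : O →+* ZMod p) {N D w : O[X]} {F : O⟦X⟧} (hFD : F * D = N)
    (hND : IsCoprime N D) (hF : ∀ n, φ (PowerSeries.coeff (n * p) F) = φ (PowerSeries.coeff n F))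
    (hw : w.Monic) (hwD : w * w ∣ D) : w = 1 := by
  have hsq : Squarefree (D.map φ) := by
    refine ZMod.squarefree_of_mul_eq_of_coeff_mul_eq (F := PowerSeries.map φ F) ?_
      (by simpa only [coe_mapRingHom] using hND.map (mapRingHom φ))
      (by simpa only [PowerSeries.coeff_map] using hF)
    rw [polynomial_map_coe, polynomial_map_coe, ← map_mul, hFD]
  have hunit := hsq _ (by simpa only [Polynomial.map_mul] using Polynomial.map_dvd φ hwD)
  rw [← hw.natDegree_eq_zero, ← hw.natDegree_map φ]
  exact natDegree_eq_zero_of_isUnit hunit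

namespace Rat

/-- The localization `ℤ_(p)`, as a subring of `ℚ`. -/
def integersAt (p : ℕ) [hp : Fact p.Prime] : Subring ℚ where
  carrier := {x | ¬ p ∣ x.den}
  zero_mem' := hp.out.not_dvd_one
  one_mem' := hp.out.not_dvd_one
  add_mem' {x y} hx hy h := (hp.out.dvd_mul.1 (h.trans (add_den_dvd x y))).elim hx hy
  mul_mem' {x y} hx hy h := (hp.out.dvd_mul.1 (h.trans (mul_den_dvd x y))).elim hx hy
  neg_mem' := by simp

variable {p : ℕ} [Fact p.Prime]

theorem natCast_den_ne_zero_of_mem_integersAt {x : ℚ} (hx : x ∈ integersAt p) :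
    (x.den : ZMod p) ≠ 0 := by
  rwa [Ne, ZMod.natCast_eq_zero_iff]

/-- Reduction mod `p`: the cast `x ↦ x.num / x.den` into `ZMod p`, additive and multiplicative where
`p ∤ x.den`. -/
def reduceMod (p : ℕ) [Fact p.Prime] : integersAt p →+* ZMod p where
  toFun x := (x : ℚ)
  map_one' := cast_one
  map_mul' x y := cast_mul_of_ne_zero (natCast_den_ne_zero_of_mem_integersAt x.2)
    (natCast_den_ne_zero_of_mem_integersAt y.2)
  map_zero' := cast_zero
  map_add' x y := cast_add_of_ne_zero (natCast_den_ne_zero_of_mem_integersAt x.2)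
    (natCast_den_ne_zero_of_mem_integersAt y.2)

theorem mem_integersAt_of_padicValRat_nonneg {x : ℚ} (h : x ≠ 0 → 0 ≤ padicValRat p x) :
    x ∈ integersAt p := by
  intro hpx
  have hx : x ≠ 0 := fun h0 => by simp [h0, (Fact.out : p.Prime).one_lt.ne'] at hpx
  have hnum : padicValInt p x.num = 0 := padicValInt.eq_zero_of_not_dvd fun hn =>
    Nat.Prime.not_coprime_iff_dvd.2 ⟨p, Fact.out, Int.natCast_dvd.1 hn, hpx⟩ x.reduced
  have hval := h hx
  rw [padicValRat_def, hnum] at hval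
  have hden := one_le_padicValNat_of_dvd x.den_pos.ne' hpx
  omega

theorem reduceMod_eq_zero_of_one_le_padicValRat {x : integersAt p}
    (h : 1 ≤ padicValRat p x) : reduceMod p x = 0 := by
  have hden : padicValNat p (x : ℚ).den = 0 := padicValNat.eq_zero_of_not_dvd x.2
  rw [padicValRat_def, hden] at h
  have hnum : (p : ℤ) ∣ (x : ℚ).num := by
    simpa using (padicValInt_dvd_iff 1 (x : ℚ).num).2 (Or.inr (by omega))
  show ((x : ℚ) : ZMod p) = 0
  rw [cast_def, (ZMod.intCast_zmod_eq_zero_iff_dvd _ p).2 hnum, zero_div]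

theorem reduceMod_eq_of_padicValRat_sub {x y : integersAt p}
    (h : (x : ℚ) = y ∨ 1 ≤ padicValRat p (x - y)) : reduceMod p x = reduceMod p y := by
  rcases h with h | h
  · rw [Subtype.ext h]
  · rw [← sub_eq_zero, ← map_sub]
    exact reduceMod_eq_zero_of_one_le_padicValRat h

theorem eventually_not_dvd_den (x : ℚ) : ∀ᶠ p in Filter.atTop, ¬ p ∣ x.den :=
  (Filter.eventually_gt_atTop x.den).mono fun _ hp h => (Nat.le_of_dvd x.den_pos h).not_gt hp

end Rat

theorem Polynomial.eventually_not_dvd_den_coeff (g : ℚ[X]) :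
    ∀ᶠ p in Filter.atTop, ∀ i, ¬ p ∣ (g.coeff i).den := by
  filter_upwards [(Filter.eventually_all_finset g.support).2 fun i _ =>
    Rat.eventually_not_dvd_den (g.coeff i), Rat.eventually_not_dvd_den 0] with p hsupp hzero i
  by_cases hi : i ∈ g.support
  · exact hsupp i hi
  · rwa [notMem_support_iff.1 hi]

open Rat in
theorem Polynomial.Monic.eq_one_of_mul_self_dvd_of_integersAt {p : ℕ} [Fact p.Prime]
    {N D U V w : ℚ[X]} {F : ℚ⟦X⟧} (hFD : F * D = N) (hUV : U * N + V * D = 1)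
    (hw : w.Monic) (hwD : w * w ∣ D)
    (hint : ∀ g ∈ [N, D, U, V, w], ∀ i, g.coeff i ∈ integersAt p)
    (hFint : ∀ n, PowerSeries.coeff n F ∈ integersAt p)
    (hFcong : ∀ n, PowerSeries.coeff (n * p) F = PowerSeries.coeff n F ∨
      1 ≤ padicValRat p (PowerSeries.coeff (n * p) F - PowerSeries.coeff n F)) : w = 1 := by
  set ι := (integersAt p).subtype
  have hι : Function.Injective ι := Subtype.val_injective
  have hlift : ∀ g ∈ [N, D, U, V, w], g ∈ lifts ι := fun g hg =>
    (lifts_iff_coeff_lifts g).2 fun i => ⟨⟨_, hint g hg i⟩, rfl⟩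
  obtain ⟨NO, rfl⟩ := (mem_lifts N).1 (hlift N (by simp))
  obtain ⟨DO, rfl⟩ := (mem_lifts D).1 (hlift D (by simp))
  obtain ⟨UO, rfl⟩ := (mem_lifts U).1 (hlift U (by simp))
  obtain ⟨VO, rfl⟩ := (mem_lifts V).1 (hlift V (by simp))
  obtain ⟨wO, rfl, -, hwO⟩ := lifts_and_natDegree_eq_and_monic (hlift w (by simp)) hw
  obtain ⟨FO, rfl⟩ : ∃ FO, PowerSeries.map ι FO = F :=
    ⟨PowerSeries.mk fun n => ⟨_, hFint n⟩, by ext n; simp [ι]⟩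
  have hFD' : FO * DO = NO := PowerSeries.map_injective ι hι <| by
    rwa [map_mul, ← polynomial_map_coe, ← polynomial_map_coe]
  have hND : IsCoprime NO DO := ⟨UO, VO, Polynomial.map_injective ι hι (by simpa using hUV)⟩
  have hcong (n : ℕ) : reduceMod p (PowerSeries.coeff (n * p) FO) =
      reduceMod p (PowerSeries.coeff n FO) :=
    reduceMod_eq_of_padicValRat_sub (by simpa [ι] using hFcong n)
  have hwD' : wO * wO ∣ DO := by rwa [← map_dvd_map ι hι (hwO.mul hwO), Polynomial.map_mul]
  rw [hwO.eq_one_of_mul_self_dvd_of_ringHom (reduceMod p) hFD' hND hcong hwD', Polynomial.map_one]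

theorem RatFunc.eval_denom_ne_zero {K : Type*} [Field K] {f : RatFunc K} {P Q : K[X]}
    (hf : f = algebraMap K[X] (RatFunc K) P / algebraMap K[X] (RatFunc K) Q) {x : K}
    (hQ : Q.eval x ≠ 0) : f.denom.eval x ≠ 0 :=
  ne_zero_of_dvd_ne_zero hQ <| eval_dvd <| (RatFunc.denom_dvd fun h => hQ (by simp [h])).2 ⟨P, hf⟩

theorem RatFunc.exists_coe_eq_ofPowerSeries {K : Type*} [Field K] {f : RatFunc K}
    (hf : f.denom.eval 0 ≠ 0) :
    ∃ F : K⟦X⟧, F * f.denom = f.num ∧ (f : K⸨X⸩) = HahnSeries.ofPowerSeries ℤ K F := by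
  set F : K⟦X⟧ := f.num * (f.denom : K⟦X⟧)⁻¹
  have hF : F * f.denom = f.num := by
    rw [mul_assoc, PowerSeries.inv_mul_cancel _ (by simpa [coeff_zero_eq_eval_zero] using hf),
      mul_one]
  refine ⟨F, hF, ?_⟩
  rw [← f.num_div_denom, algebraMap_apply_div, div_eq_iff]
  · simp [← hF]
  · exact (map_ne_zero_iff _ HahnSeries.ofPowerSeries_injective).2
      (coe_eq_zero_iff.not.2 f.denom_ne_zero)

theorem Polynomial.squarefree_of_forall_monic_mul_self_dvd {K : Type*} [Field K] {D : K[X]}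
    (hD : D ≠ 0) (h : ∀ w : K[X], w.Monic → w * w ∣ D → w = 1) : Squarefree D := by
  classical
  intro x hx
  have hx0 : x ≠ 0 := by rintro rfl; exact hD (by simpa using hx)
  rw [← normalize_eq_one]
  exact h _ (monic_normalize hx0) (by rwa [← normalize_mul, normalize_dvd_iff])

open Rat Filter in
/-- If the Taylor coefficients of `f = P/Q` satisfy `a_{np} ≡ a_n (mod p)` for almost
all primes `p`, then all poles of `f` are simple, i.e. the denominator of `f` in
lowest terms is squarefree. -/
theorem poles_are_simple (P Q : Polynomial ℤ) (hQ : Q.eval 0 ≠ 0)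
    (f : RatFunc ℚ)
    (hfPQ : f = algebraMap (Polynomial ℚ) (RatFunc ℚ) (P.map (Int.castRingHom ℚ)) /
      algebraMap (Polynomial ℚ) (RatFunc ℚ) (Q.map (Int.castRingHom ℚ)))
    (hgauss : {p : ℕ | p.Prime ∧ ¬ SatisfiesModP p (taylorCoeff f)}.Finite) :
    Squarefree f.denom := by
  have hQ0 : (Q.map (Int.castRingHom ℚ)).eval 0 ≠ 0 := by
    rw [eval_zero_map, eq_intCast]
    exact_mod_cast hQ
  obtain ⟨F, hFD, hcoe⟩ := RatFunc.exists_coe_eq_ofPowerSeries (f.eval_denom_ne_zero hfPQ hQ0)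
  have htaylor (n : ℕ) : taylorCoeff f n = PowerSeries.coeff n F := by
    rw [taylorCoeff, hcoe, HahnSeries.ofPowerSeries_apply_coeff]
  obtain ⟨U, V, hUV⟩ := f.isCoprime_num_denom
  refine squarefree_of_forall_monic_mul_self_dvd f.denom_ne_zero fun w hw hwD => ?_
  have hgood : ∀ᶠ p in atTop, p ∉ {p : ℕ | p.Prime ∧ ¬ SatisfiesModP p (taylorCoeff f)} ∧
      ∀ g ∈ [f.num, f.denom, U, V, w], ∀ i, ¬ p ∣ (g.coeff i).den :=
    (Nat.cofinite_eq_atTop ▸ hgauss.eventually_cofinite_notMem).and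
      ((eventually_all_finite (List.finite_toSet _)).2 fun g _ => g.eventually_not_dvd_den_coeff)
  obtain ⟨p, hp, hbad, hint⟩ :=
    ((Nat.frequently_atTop_iff_infinite.2 Nat.infinite_setOfPred_prime).and_eventually hgood).exists
  have := Fact.mk hp
  have hsat : SatisfiesModP p (taylorCoeff f) := not_not.1 fun h => hbad ⟨hp, h⟩
  refine hw.eq_one_of_mul_self_dvd_of_integersAt hFD hUV hwD hint (fun n => ?_) (fun n => ?_)
  · exact mem_integersAt_of_padicValRat_nonneg (by simpa [htaylor] using hsat.1 n)
  · simpa [← htaylor] using hsat.2 n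
end

section
/- The Delannoy numbers D_{n1,n2} = ∑_{k=0}^{min(n1,n2)} C(n1,k)·C(n1+n2−k, n1) satisfy, for every prime p, all m1, m2 ≥ 1 and r ≥ 1: D_{m1·p^r, m2·p^r} ≡ D_{m1·p^{r-1}, m2·p^{r-1}} (mod p^r). -/
/-!
Write `D_{a,b}` as the `b`-th partial sum of the coefficients of `((1 + X) / (1 - X)) ^ a`.
Modulo `p ^ (s + 1)`, the congruence `(x + y) ^ p ≡ x ^ p + y ^ p (mod p)` lifts to
`(1 ± X) ^ (m p ^ (s + 1)) ≡ (1 ± X ^ p) ^ (m p ^ s)`, so `((1 + X) / (1 - X)) ^ (m p ^ (s + 1))` is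
`((1 + X) / (1 - X)) ^ (m p ^ s)` with `X` replaced by `X ^ p`. Partial sums up to `p d` of a
series in `X ^ p` are the partial sums up to `d` of the original series.
-/

/-- The Delannoy numbers. -/
def delannoy (n₁ n₂ : ℕ) : ℤ :=
  ∑ k ∈ Finset.range (min n₁ n₂ + 1), (n₁.choose k : ℤ) * ((n₁ + n₂ - k).choose n₁ : ℤ)

open PowerSeries Finset

section PrimePow

variable {A : Type*} [CommRing A] {p : ℕ}

theorem prime_dvd_add_pow_sub (hp : p.Prime) (x y : A) :
    (p : A) ∣ (x + y) ^ p - (x ^ p + y ^ p) := by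
  obtain ⟨r, hr⟩ := exists_add_pow_prime_eq hp x y
  exact ⟨x * y * r, by rw [hr]; ring⟩

theorem prime_dvd_sub_pow_sub (hp : p.Prime) (x y : A) :
    (p : A) ∣ (x - y) ^ p - (x ^ p - y ^ p) := by
  obtain ⟨r, hr⟩ := exists_add_pow_prime_eq hp (x - y) y
  rw [sub_add_cancel] at hr
  exact ⟨-((x - y) * y * r), by rw [hr]; ring⟩

theorem pow_mul_pow_succ_eq_of_dvd_sub {s : ℕ} (hps : (p : A) ^ (s + 1) = 0) {x y : A}
    (hxy : (p : A) ∣ x ^ p - y) (m : ℕ) : x ^ (m * p ^ (s + 1)) = y ^ (m * p ^ s) := by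
  have hm : (p : A) ∣ (x ^ p) ^ m - y ^ m := hxy.trans (sub_dvd_pow_sub_pow _ _ m)
  have h := dvd_sub_pow_of_dvd_sub hm s
  rw [hps, zero_dvd_iff, sub_eq_zero, ← pow_mul, ← pow_mul, ← pow_mul] at h
  rw [← h, pow_succ]
  ring_nf

end PrimePow

namespace PowerSeries

variable {R : Type*} [CommRing R]

theorem coeff_one_add_X_pow (a n : ℕ) : coeff n ((1 + X : R⟦X⟧) ^ a) = (a.choose n : R) := by
  have h : (1 + X : R⟦X⟧) ^ a = ((1 + Polynomial.X) ^ a : Polynomial R) := by simp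
  rw [h, Polynomial.coeff_coe, Polynomial.coeff_one_add_X_pow]

theorem coeff_mul_invOneSubPow_one (f : R⟦X⟧) (n : ℕ) :
    coeff n (f * (invOneSubPow R 1).val) = ∑ i ∈ range (n + 1), coeff i f := by
  simp [coeff_mul, Nat.sum_antidiagonal_eq_sum_range_succ_mk,
    invOneSubPow_val_succ_eq_mk_add_choose]

theorem sum_range_coeff_expand {p : ℕ} (hp : p ≠ 0) (f : R⟦X⟧) (d : ℕ) :
    ∑ i ∈ range (p * d + 1), coeff i (expand p hp f) = ∑ j ∈ range (d + 1), coeff j f := by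
  have hsub : (range (d + 1)).map ⟨(p * ·), mul_right_injective₀ hp⟩ ⊆ range (p * d + 1) := by
    intro i
    simp only [mem_map, mem_range, Function.Embedding.coeFn_mk]
    rintro ⟨j, hj, rfl⟩
    exact Nat.lt_succ_of_le (Nat.mul_le_mul_left p (Nat.lt_succ_iff.mp hj))
  rw [← sum_subset hsub, sum_map]
  · simp only [Function.Embedding.coeFn_mk, coeff_expand_mul]
  · intro i hi hnot
    refine coeff_expand_of_not_dvd p hp f fun ⟨j, hj⟩ => hnot ?_
    subst hj
    simp only [mem_range, mem_map, Function.Embedding.coeFn_mk] at hi ⊢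
    exact ⟨j, by nlinarith [Nat.pos_of_ne_zero hp], rfl⟩

theorem natCast_pow_eq_zero {p s : ℕ} (hps : (p : R) ^ s = 0) : (p : R⟦X⟧) ^ s = 0 := by
  rw [← map_natCast (C (R := R)), ← map_pow, hps, map_zero]

variable {p s : ℕ} (hp : p.Prime) (hps : (p : R) ^ (s + 1) = 0)
include hp hps

theorem one_add_X_pow_mul_pow_succ (m : ℕ) :
    (1 + X : R⟦X⟧) ^ (m * p ^ (s + 1)) = expand p hp.ne_zero ((1 + X) ^ (m * p ^ s)) := by
  rw [map_pow, map_add, map_one, expand_X]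
  refine pow_mul_pow_succ_eq_of_dvd_sub (natCast_pow_eq_zero hps) ?_ m
  simpa using prime_dvd_add_pow_sub hp (1 : R⟦X⟧) X

theorem one_sub_X_pow_mul_pow_succ (m : ℕ) :
    (1 - X : R⟦X⟧) ^ (m * p ^ (s + 1)) = expand p hp.ne_zero ((1 - X) ^ (m * p ^ s)) := by
  rw [map_pow, map_sub, map_one, expand_X]
  refine pow_mul_pow_succ_eq_of_dvd_sub (natCast_pow_eq_zero hps) ?_ m
  simpa using prime_dvd_sub_pow_sub hp (1 : R⟦X⟧) X

end PowerSeries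

theorem delannoy_cast_eq_coeff (R : Type*) [CommRing R] (a b : ℕ) :
    (delannoy a b : R) = coeff b ((1 + X) ^ a * (invOneSubPow R (a + 1)).val) := by
  rw [invOneSubPow_val_succ_eq_mk_add_choose, coeff_mul, Nat.sum_antidiagonal_eq_sum_range_succ_mk,
    delannoy, ← sum_subset (range_subset_range.mpr (by omega : min a b + 1 ≤ b + 1))]
  · push_cast
    refine sum_congr rfl fun k hk => ?_
    rw [coeff_one_add_X_pow, coeff_mk, Nat.add_sub_assoc (by simp at hk; omega)]
  · intro k hk hk'
    simp only [mem_range] at hk hk'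
    rw [coeff_one_add_X_pow, Nat.choose_eq_zero_of_lt (by omega), Nat.cast_zero, zero_mul]

noncomputable def cayleyPow (R : Type*) [CommRing R] (a : ℕ) : R⟦X⟧ :=
  (1 + X) ^ a * (invOneSubPow R a).val

section CayleyPow

variable {R : Type*} [CommRing R]

theorem cayleyPow_mul_one_sub_X_pow (a : ℕ) : cayleyPow R a * (1 - X) ^ a = (1 + X) ^ a := by
  rw [cayleyPow, mul_assoc, ← invOneSubPow_inv_eq_one_sub_pow, Units.val_inv, mul_one]

theorem cayleyPow_mul_pow_succ {p s : ℕ} (hp : p.Prime) (hps : (p : R) ^ (s + 1) = 0) (m : ℕ) :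
    cayleyPow R (m * p ^ (s + 1)) = expand p hp.ne_zero (cayleyPow R (m * p ^ s)) := by
  have hunit : IsUnit ((1 - X : R⟦X⟧) ^ (m * p ^ (s + 1))) := by
    rw [← invOneSubPow_inv_eq_one_sub_pow]
    exact (invOneSubPow R _)⁻¹.isUnit
  rw [← hunit.mul_left_inj, cayleyPow_mul_one_sub_X_pow, one_sub_X_pow_mul_pow_succ hp hps,
    ← map_mul, cayleyPow_mul_one_sub_X_pow, one_add_X_pow_mul_pow_succ hp hps]

theorem delannoy_cast_eq_sum_coeff_cayleyPow (a b : ℕ) :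
    (delannoy a b : R) = ∑ i ∈ range (b + 1), coeff i (cayleyPow R a) := by
  rw [delannoy_cast_eq_coeff, invOneSubPow_add, Units.val_mul, ← mul_assoc,
    coeff_mul_invOneSubPow_one, cayleyPow]

end CayleyPow

theorem delannoy_mul_pow_succ_cast {R : Type*} [CommRing R] {p s : ℕ} (hp : p.Prime)
    (hps : (p : R) ^ (s + 1) = 0) (m d : ℕ) :
    (delannoy (m * p ^ (s + 1)) (p * d) : R) = delannoy (m * p ^ s) d := by
  rw [delannoy_cast_eq_sum_coeff_cayleyPow, delannoy_cast_eq_sum_coeff_cayleyPow,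
    cayleyPow_mul_pow_succ hp hps, sum_range_coeff_expand]

theorem delannoy_gauss_congruence_general (p : ℕ) (hp : p.Prime) (m₁ m₂ r : ℕ)
    (hr : 1 ≤ r) :
    delannoy (m₁ * p ^ r) (m₂ * p ^ r) ≡
      delannoy (m₁ * p ^ (r - 1)) (m₂ * p ^ (r - 1)) [ZMOD (p : ℤ) ^ r] := by
  obtain ⟨s, rfl⟩ : ∃ s, r = s + 1 := ⟨r - 1, by omega⟩
  have hps : (p : ZMod (p ^ (s + 1))) ^ (s + 1) = 0 := by
    exact_mod_cast ZMod.natCast_self (p ^ (s + 1))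
  have hb : m₂ * p ^ (s + 1) = p * (m₂ * p ^ s) := by ring
  rw [Nat.add_sub_cancel, hb, ← Nat.cast_pow, ← ZMod.intCast_eq_intCast_iff]
  exact delannoy_mul_pow_succ_cast hp hps m₁ (m₂ * p ^ s)

/-- The Delannoy numbers satisfy the Gauss congruences
`D_{m₁p^r, m₂p^r} ≡ D_{m₁p^{r-1}, m₂p^{r-1}} (mod p^r)`. -/
theorem delannoy_gauss_congruence (p : ℕ) (hp : p.Prime) (m₁ m₂ r : ℕ)
    (hm₁ : 1 ≤ m₁) (hm₂ : 1 ≤ m₂) (hr : 1 ≤ r) :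
    delannoy (m₁ * p ^ r) (m₂ * p ^ r) ≡
      delannoy (m₁ * p ^ (r - 1)) (m₂ * p ^ (r - 1)) [ZMOD (p : ℤ) ^ r] :=
  delannoy_gauss_congruence_general p hp m₁ m₂ r hr
end

section
/- Define c_{k,ℓ} for k, ℓ ≥ 0 by c_{k,ℓ} = ∑ a_{j1}···a_{jk}, where the sum is over tuples (j1,...,jk) of nonnegative integers with j1+...+jk = ℓ, and (a_i) is any sequence of integers with a_0 = ±1 (so that f(y) = ∑ a_i y^i is a unit in ℤ[[y]]). Then for every prime p, all k, ℓ ≥ 0 (not both of which are 0 after division) and all r ≥ 1: c_{kp^r, ℓp^r} ≡ c_{kp^{r-1}, ℓp^{r-1}} (mod p^r). -/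
/-! With `f = ∑ aᵢ yⁱ`, `c_{k,ℓ}` is the coefficient of `y^ℓ` in `f^k`. Modulo `p` the Frobenius
gives `f(y)^p ≡ f(y^p)`, and the usual lifting `A ≡ B [p] → A^{p^s} ≡ B^{p^s} [p^{s+1}]` turns this
into `f(y)^{k p^{s+1}} ≡ f(y^p)^{k p^s} [p^{s+1}]` coefficientwise; the coefficient of
`y^{ℓ p^{s+1}}` on the right is `c_{k p^s, ℓ p^s}`. -/

open PowerSeries Finset

namespace PowerSeries

theorem coeff_pow_eq_sum_antidiagonalTuple {R : Type*} [CommSemiring R] (φ : R⟦X⟧)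
    (k n : ℕ) : coeff n (φ ^ k) = ∑ j ∈ Nat.antidiagonalTuple k n, ∏ i, coeff (j i) φ := by
  have h := coeff_prod (fun _ : Fin k => φ) n univ
  rw [prod_const, card_univ, Fintype.card_fin] at h
  rw [h]
  exact sum_equiv Finsupp.equivFunOnFinite (by simp [Nat.mem_antidiagonalTuple]) (by simp)

theorem C_dvd_iff_forall_dvd_coeff {R : Type*} [CommSemiring R] (a : R) (ψ : R⟦X⟧) :
    C a ∣ ψ ↔ ∀ n, a ∣ coeff n ψ := by
  constructor
  · rintro ⟨g, rfl⟩ n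
    rw [coeff_C_mul]
    exact dvd_mul_right a _
  · intro h
    choose b hb using h
    exact ⟨mk b, ext fun n => by rw [coeff_C_mul, coeff_mk, hb]⟩

theorem map_frobenius_expand {R : Type*} [CommRing R] (p : ℕ) [ExpChar R p]
    (φ : R⟦X⟧) : map (frobenius R p) (expand p (expChar_ne_zero R p) φ) = φ ^ p :=
  MvPowerSeries.map_frobenius_expand p _

theorem natCast_dvd_pow_sub_expand {p : ℕ} (hp : p.Prime) (φ : ℤ⟦X⟧) :
    (p : ℤ⟦X⟧) ∣ φ ^ p - expand p hp.ne_zero φ := by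
  have := Fact.mk hp
  rw [← map_natCast C, C_dvd_iff_forall_dvd_coeff]
  intro n
  rw [← ZMod.intCast_zmod_eq_zero_iff_dvd, ← eq_intCast (Int.castRingHom (ZMod p)), ← coeff_map,
    map_sub, map_pow, map_expand, ← map_frobenius_expand, ZMod.frobenius_zmod, map_id, id_eq,
    sub_self, map_zero]

theorem coeff_pow_mul_prime_pow_modEq {p : ℕ} (hp : p.Prime) (φ : ℤ⟦X⟧) (k ℓ s : ℕ) :
    coeff (ℓ * p ^ (s + 1)) (φ ^ (k * p ^ (s + 1))) ≡ coeff (ℓ * p ^ s) (φ ^ (k * p ^ s))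
      [ZMOD p ^ (s + 1)] := by
  have hdvd : (p : ℤ⟦X⟧) ^ (s + 1) ∣
      φ ^ (k * p ^ (s + 1)) - expand p hp.ne_zero (φ ^ (k * p ^ s)) := by
    have h := (dvd_sub_pow_of_dvd_sub (natCast_dvd_pow_sub_expand hp φ) s).trans
      (sub_dvd_pow_sub_pow _ _ k)
    convert h using 2
    · ring
    · rw [map_pow]; ring
  rw [← map_natCast C, ← map_pow, C_dvd_iff_forall_dvd_coeff] at hdvd
  have h := hdvd (p * (ℓ * p ^ s))
  rw [map_sub, coeff_expand_mul] at h
  rw [show ℓ * p ^ (s + 1) = p * (ℓ * p ^ s) by ring]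
  exact (Int.modEq_iff_dvd.mpr h).symm

end PowerSeries

theorem powers_of_unit_series_gauss_general (a : ℕ → ℤ)
    (c : ℕ → ℕ → ℤ)
    (hc : ∀ k ℓ : ℕ, c k ℓ = ∑ j ∈ Finset.Nat.antidiagonalTuple k ℓ, ∏ i, a (j i))
    (p : ℕ) (hp : p.Prime) (k ℓ r : ℕ) :
    c (k * p ^ r) (ℓ * p ^ r) ≡ c (k * p ^ (r - 1)) (ℓ * p ^ (r - 1)) [ZMOD (p : ℤ) ^ r] := by
  have hc_coeff (k ℓ : ℕ) : c k ℓ = coeff ℓ (mk a ^ k) := by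
    simp only [hc, coeff_pow_eq_sum_antidiagonalTuple, coeff_mk]
  obtain _ | s := r
  · simp
  · rw [hc_coeff, hc_coeff, Nat.add_sub_cancel]
    exact coeff_pow_mul_prime_pow_modEq hp (mk a) k ℓ s

/-- For a sequence `(a_i)` of integers with `a_0 = ±1`, the coefficients
`c_{k,ℓ} = ∑_{j₁+⋯+j_k = ℓ} a_{j₁}⋯a_{j_k}` (the coefficient of `y^ℓ` in `f(y)^k`
for `f = ∑ a_i y^i`) satisfy the two-variable Gauss congruences for every prime. -/
theorem powers_of_unit_series_gauss (a : ℕ → ℤ) (ha : a 0 = 1 ∨ a 0 = -1)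
    (c : ℕ → ℕ → ℤ)
    (hc : ∀ k ℓ : ℕ, c k ℓ = ∑ j ∈ Finset.Nat.antidiagonalTuple k ℓ, ∏ i, a (j i))
    (p : ℕ) (hp : p.Prime) (k ℓ r : ℕ) (hr : 1 ≤ r) :
    c (k * p ^ r) (ℓ * p ^ r) ≡ c (k * p ^ (r - 1)) (ℓ * p ^ (r - 1)) [ZMOD (p : ℤ) ^ r] :=
  powers_of_unit_series_gauss_general a c hc p hp k ℓ r
end

section
/- Let f(y) ∈ ℤ_p[[y]] and let c_{k,ℓ} denote the coefficient of y^ℓ in f(y)^k. Then c_{kp, ℓp} ≡ c_{k,ℓ} (mod p^{min(ν_p(k),ν_p(ℓ))+1}) for all k ≥ 1, ℓ ≥ 0. -/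
open Polynomial PowerSeries

/-- Key arithmetic fact: `p^(ν_p(k)+1) ∣ C(k,j) p^j` for `1 ≤ j ≤ k`. -/
lemma aux_nat_dvd (p : ℕ) (hp : p.Prime) (k j : ℕ) (h1 : 1 ≤ j) (h2 : j ≤ k) :
    p ^ (k.factorization p + 1) ∣ k.choose j * p ^ j := by
  have hc : k.choose j ≠ 0 := (Nat.choose_pos h2).ne'
  have hj : j ≠ 0 := by omega
  have hdvd : k ∣ k.choose j * j := by
    obtain ⟨k', rfl⟩ : ∃ k', k = k' + 1 := ⟨k - 1, by omega⟩
    obtain ⟨j', rfl⟩ : ∃ j', j = j' + 1 := ⟨j - 1, by omega⟩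
    exact ⟨(k').choose j', (Nat.add_one_mul_choose_eq k' j').symm⟩
  have hs : p ^ (k.factorization p) ∣ k.choose j * j :=
    (Nat.ordProj_dvd k p).trans hdvd
  have hs' : k.factorization p ≤ (k.choose j * j).factorization p :=
    (Nat.Prime.pow_dvd_iff_le_factorization hp (mul_ne_zero hc hj)).mp hs
  rw [Nat.factorization_mul hc hj] at hs'
  simp only [Finsupp.add_apply] at hs'
  have ht : j.factorization p < j := Nat.factorization_lt p hj
  rw [Nat.Prime.pow_dvd_iff_le_factorization hp
    (mul_ne_zero hc (pow_ne_zero _ hp.ne_zero)),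
    Nat.factorization_mul hc (pow_ne_zero _ hp.ne_zero)]
  simp only [Finsupp.add_apply]
  have hpj : (p ^ j).factorization p = j := by
    rw [hp.factorization_pow]; simp
  rw [hpj]
  omega

/-- `A^p ≡ expand p A (mod p)` for polynomials over `ℤ_p`. -/
lemma aux_pow_p (p : ℕ) [Fact p.Prime] (A : Polynomial ℤ_[p]) :
    (Polynomial.C (p : ℤ_[p])) ∣ A ^ p - Polynomial.expand ℤ_[p] p A := by
  rw [Polynomial.C_dvd_iff_dvd_coeff]
  intro n
  have h0 : (A ^ p - Polynomial.expand ℤ_[p] p A).map (PadicInt.toZMod) = 0 := by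
    rw [Polynomial.map_sub, Polynomial.map_pow, Polynomial.map_expand]
    have := Polynomial.map_frobenius_expand p (A.map (PadicInt.toZMod : ℤ_[p] →+* ZMod p))
    rw [ZMod.frobenius_zmod, Polynomial.map_id] at this
    rw [this, sub_self]
  have h1 : PadicInt.toZMod ((A ^ p - Polynomial.expand ℤ_[p] p A).coeff n) = 0 := by
    rw [← Polynomial.coeff_map, h0, Polynomial.coeff_zero]
  have h2 : (A ^ p - Polynomial.expand ℤ_[p] p A).coeff n ∈
      RingHom.ker (PadicInt.toZMod : ℤ_[p] →+* ZMod p) := h1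
  rw [PadicInt.ker_toZMod, PadicInt.maximalIdeal_eq_span_p, Ideal.mem_span_singleton] at h2
  exact h2

/-- Main polynomial-level congruence. -/
lemma aux_poly_main (p : ℕ) [Fact p.Prime] (A : Polynomial ℤ_[p]) (k : ℕ) (hk : 1 ≤ k) :
    (Polynomial.C ((p : ℤ_[p]) ^ (k.factorization p + 1))) ∣
      A ^ (k * p) - Polynomial.expand ℤ_[p] p (A ^ k) := by
  obtain ⟨B, hB⟩ := aux_pow_p p A
  have hAp : A ^ p = Polynomial.C (p : ℤ_[p]) * B + Polynomial.expand ℤ_[p] p A := by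
    linear_combination hB
  have hkp : A ^ (k * p) = (A ^ p) ^ k := by rw [← pow_mul, mul_comm]
  rw [hkp, hAp, add_pow, Finset.sum_range_succ']
  simp only [pow_zero, one_mul, Nat.sub_zero, Nat.choose_zero_right, Nat.cast_one, mul_one]
  rw [← map_pow (Polynomial.expand ℤ_[p] p) A k, add_sub_cancel_right]
  apply Finset.dvd_sum
  intro i hi
  rw [Finset.mem_range] at hi
  have hnat := aux_nat_dvd p Fact.out k (i + 1) (by omega) (by omega)
  have hzp : ((p : ℤ_[p]) ^ (k.factorization p + 1)) ∣
      ((k.choose (i + 1) : ℤ_[p]) * (p : ℤ_[p]) ^ (i + 1)) := by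
    have := map_dvd (Nat.castRingHom ℤ_[p]) hnat
    push_cast at this
    exact this
  have hCd : (Polynomial.C ((p : ℤ_[p]) ^ (k.factorization p + 1))) ∣
      ((k.choose (i + 1) : Polynomial ℤ_[p]) * (Polynomial.C (p : ℤ_[p])) ^ (i + 1)) := by
    have := map_dvd (Polynomial.C : ℤ_[p] →+* Polynomial ℤ_[p]) hzp
    rw [map_mul, map_pow] at this
    simpa using this
  have heq : (Polynomial.C (p : ℤ_[p]) * B) ^ (i + 1) *
        (Polynomial.expand ℤ_[p] p) A ^ (k - (i + 1)) * (k.choose (i + 1) : Polynomial ℤ_[p])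
      = ((k.choose (i + 1) : Polynomial ℤ_[p]) * (Polynomial.C (p : ℤ_[p])) ^ (i + 1)) *
        (B ^ (i + 1) * (Polynomial.expand ℤ_[p] p) A ^ (k - (i + 1))) := by ring
  rw [heq]
  exact hCd.mul_right _

/-- Coefficient of a power of a power series equals that of its truncation's power. -/
lemma aux_coeff_pow_trunc {R : Type*} [CommRing R] (f : PowerSeries R) (N n a : ℕ)
    (h : n < N) :
    ((PowerSeries.trunc N f) ^ a).coeff n = PowerSeries.coeff (R := R) n (f ^ a) := by
  have h1 : ((PowerSeries.trunc N f : Polynomial R) ^ a).coeff n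
      = PowerSeries.coeff (R := R) n (((PowerSeries.trunc N f : Polynomial R) : PowerSeries R) ^ a) := by
    rw [← Polynomial.coe_pow, Polynomial.coeff_coe]
  rw [h1, ← PowerSeries.coeff_coe_trunc_of_lt h, PowerSeries.trunc_trunc_pow,
    PowerSeries.coeff_coe_trunc_of_lt h]

/-- For `f ∈ ℤ_p[[y]]` and `c_{k,ℓ}` the coefficient of `y^ℓ` in `f^k`, we have
`c_{kp,ℓp} ≡ c_{k,ℓ} (mod p^{min(ν_p(k),ν_p(ℓ))+1})` for `k ≥ 1`, `ℓ ≥ 0`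
(with `min(ν_p(k), ν_p(0)) = ν_p(k)` since `ν_p(0) = ∞`). -/
theorem coeff_pow_congruence (p : ℕ) [Fact p.Prime] (f : PowerSeries ℤ_[p])
    (k ℓ : ℕ) (hk : 1 ≤ k) :
    ((p : ℤ_[p])) ^
        ((if ℓ = 0 then k.factorization p else min (k.factorization p) (ℓ.factorization p)) + 1) ∣
      PowerSeries.coeff (R := ℤ_[p]) (ℓ * p) (f ^ (k * p)) - PowerSeries.coeff (R := ℤ_[p]) ℓ (f ^ k) := by
  have hp : 0 < p := (Fact.out : p.Prime).pos
  set s := k.factorization p with hs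
  set N := ℓ * p + 1 with hN
  set A := PowerSeries.trunc N f with hA
  have hℓp : ℓ * p < N := by omega
  have hℓ : ℓ < N := by
    have : ℓ ≤ ℓ * p := Nat.le_mul_of_pos_right ℓ hp
    omega
  have h1 : PowerSeries.coeff (R := ℤ_[p]) (ℓ * p) (f ^ (k * p)) = (A ^ (k * p)).coeff (ℓ * p) :=
    (aux_coeff_pow_trunc f N (ℓ * p) (k * p) hℓp).symm
  have h2 : PowerSeries.coeff (R := ℤ_[p]) ℓ (f ^ k) = (A ^ k).coeff ℓ :=
    (aux_coeff_pow_trunc f N ℓ k hℓ).symm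
  have hmain := aux_poly_main p A k hk
  rw [Polynomial.C_dvd_iff_dvd_coeff] at hmain
  have h3 := hmain (ℓ * p)
  rw [Polynomial.coeff_sub, Polynomial.coeff_expand_mul hp] at h3
  rw [h1, h2]
  refine dvd_trans (pow_dvd_pow (p : ℤ_[p]) ?_) h3
  split
  · exact le_refl _
  · exact Nat.add_le_add_right (min_le_left _ _) 1
end
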